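/- arXiv:1911.12988 — 4 statements merged into one kernel-verified Lean document; each statement's English description precedes it below -/
import Mathlib

section
/- There exists a constant c > 0 such that every finite set P of n ≥ 3 points in the plane in general position admits at least c·n nontrivial 4-squares (empty squares in arbitrary orientation with exactly four contact pairs, excluding the degenerate single-point squares). -/
open Real Set

/-- The four side labels of a square. -/
inductive SqSide : Type
  | top
  | right
  | bottom
  | left
  deriving DecidableEq

/-- A (solid, closed) square in the plane, given by its center, its radius `r`
(half the side length) and its orientation `θ`. -/
structure Square : Type where
  center : ℝ × ℝ
  r : ℝ
  θ : ℝ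

namespace Square

/-- The local `x`-coordinate of a point in the rotated frame of the square. -/
noncomputable def lx (S : Square) (p : ℝ × ℝ) : ℝ :=
  (p.1 - S.center.1) * Real.cos S.θ + (p.2 - S.center.2) * Real.sin S.θ

/-- The local `y`-coordinate of a point in the rotated frame of the square. -/
noncomputable def ly (S : Square) (p : ℝ × ℝ) : ℝ :=
  -(p.1 - S.center.1) * Real.sin S.θ + (p.2 - S.center.2) * Real.cos S.θ

/-- A valid parametrization: nonnegative radius and orientation in `[0, π/2)`.
Every geometric square (with sides parallel to the directions `θ` and `θ + π/2`
for some `θ`) has such a parametrization, which is unique when `0 < r`. -/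
def Valid (S : Square) : Prop :=
  0 ≤ S.r ∧ 0 ≤ S.θ ∧ S.θ < Real.pi / 2

/-- Membership in the closed solid square. -/
def Mem (S : Square) (p : ℝ × ℝ) : Prop :=
  |S.lx p| ≤ S.r ∧ |S.ly p| ≤ S.r

/-- The square as a subset of the plane. -/
def toSet (S : Square) : Set (ℝ × ℝ) :=
  {p | S.Mem p}

/-- Membership in the interior of the square. -/
def InteriorMem (S : Square) (p : ℝ × ℝ) : Prop :=
  |S.lx p| < S.r ∧ |S.ly p| < S.r

/-- `p` lies on the closed side of `S` labeled `a` (sides include their endpoints). -/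
def OnSide (S : Square) (a : SqSide) (p : ℝ × ℝ) : Prop :=
  match a with
  | SqSide.top    => S.ly p = S.r ∧ |S.lx p| ≤ S.r
  | SqSide.bottom => S.ly p = -S.r ∧ |S.lx p| ≤ S.r
  | SqSide.right  => S.lx p = S.r ∧ |S.ly p| ≤ S.r
  | SqSide.left   => S.lx p = -S.r ∧ |S.ly p| ≤ S.r

/-- `p` lies on the boundary of `S`. -/
def OnBoundary (S : Square) (p : ℝ × ℝ) : Prop :=
  ∃ a : SqSide, S.OnSide a p

/-- `S` is a square in orientation `φ`, i.e. its sides are parallel to the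
directions `φ` and `φ + π/2` (orientations are taken modulo `π/2`). -/
def InOrientation (S : Square) (φ : ℝ) : Prop :=
  ∃ k : ℤ, φ - S.θ = (k : ℝ) * (Real.pi / 2)

/-- The opposite side label. -/
def _root_.SqSide.opp : SqSide → SqSide
  | SqSide.top => SqSide.bottom
  | SqSide.bottom => SqSide.top
  | SqSide.left => SqSide.right
  | SqSide.right => SqSide.left

end Square

/-- The set of contact pairs of the square `S` with respect to the point set `P`:
pairs `(p, a)` with `p ∈ P` lying on the side of `S` labeled `a`. -/
def contactPairs (P : Finset (ℝ × ℝ)) (S : Square) : Set ((ℝ × ℝ) × SqSide) :=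
  {pa | pa.1 ∈ P ∧ S.OnSide pa.2 pa.1}

/-- The set of contact points of `S`: points of `P` on the boundary of `S`. -/
def contactPoints (P : Finset (ℝ × ℝ)) (S : Square) : Set (ℝ × ℝ) :=
  {p | p ∈ P ∧ S.OnBoundary p}

/-- `S` is an empty square among `P`: a (validly parametrized) square whose
interior contains no point of `P`. -/
def IsEmptySquare (P : Finset (ℝ × ℝ)) (S : Square) : Prop :=
  S.Valid ∧ ∀ p ∈ P, ¬ S.InteriorMem p

/-- `P` is in general position: no square in any orientation has five or more
contact pairs among `P`. -/
def GenPos (P : Finset (ℝ × ℝ)) : Prop :=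
  ∀ S : Square, S.Valid → (contactPairs P S).ncard ≤ 4

/-- A `4`-square: an empty square with exactly four contact pairs. -/
def Is4Square (P : Finset (ℝ × ℝ)) (S : Square) : Prop :=
  IsEmptySquare P S ∧ (contactPairs P S).ncard = 4

/-- A nontrivial `4`-square: a `4`-square which is not a degenerate
single-point square (i.e. it has positive radius). -/
def IsNontrivial4Square (P : Finset (ℝ × ℝ)) (S : Square) : Prop :=
  Is4Square P S ∧ 0 < S.r

/-- A `(4,k)`-square: a `4`-square with exactly `k` contact points. -/
def Is4kSquare (P : Finset (ℝ × ℝ)) (k : ℕ) (S : Square) : Prop :=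
  Is4Square P S ∧ (contactPoints P S).ncard = k

/-- `S` is stapled: some side of `S` contains two distinct points of `P`. -/
def IsStapled (P : Finset (ℝ × ℝ)) (S : Square) : Prop :=
  ∃ a : SqSide, ∃ p ∈ P, ∃ q ∈ P, p ≠ q ∧ S.OnSide a p ∧ S.OnSide a q


noncomputable section Aux

private def sqDist (u w : ℝ × ℝ) : ℝ := (u.1 - w.1)^2 + (u.2 - w.2)^2

private lemma sqDist_comm (u w : ℝ × ℝ) : sqDist u w = sqDist w u := by
  unfold sqDist; ring

private lemma eq_of_sqDist_nonpos {u w : ℝ × ℝ} (h : sqDist u w ≤ 0) : u = w := by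
  unfold sqDist at h
  have h1 : u.1 = w.1 := by nlinarith [sq_nonneg (u.2 - w.2), sq_nonneg (u.1 - w.1)]
  have h2 : u.2 = w.2 := by nlinarith [sq_nonneg (u.1 - w.1), sq_nonneg (u.2 - w.2)]
  exact Prod.ext h1 h2

private lemma lxly_sq (S : Square) (u w : ℝ × ℝ) :
    (S.lx u - S.lx w)^2 + (S.ly u - S.ly w)^2 = sqDist u w := by
  unfold Square.lx Square.ly sqDist
  linear_combination ((u.1 - w.1)^2 + (u.2 - w.2)^2) * (Real.sin_sq_add_cos_sq S.θ)

private lemma mem_of_onSide (S : Square) (hr : 0 ≤ S.r) (a : SqSide) (x : ℝ × ℝ)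
    (h : S.OnSide a x) : S.Mem x := by
  cases a with
  | top => exact ⟨h.2, by rw [h.1, abs_of_nonneg hr]⟩
  | bottom => exact ⟨h.2, by rw [h.1, abs_neg, abs_of_nonneg hr]⟩
  | right => exact ⟨by rw [h.1, abs_of_nonneg hr], h.2⟩
  | left => exact ⟨by rw [h.1, abs_neg, abs_of_nonneg hr], h.2⟩

private lemma exists_diag (p q : ℝ × ℝ) (hpq : p ≠ q) :
    ∃ S : Square, S.Valid ∧ 0 < S.r ∧ |S.lx p| = S.r ∧ |S.ly p| = S.r ∧
      S.lx q = -S.lx p ∧ S.ly q = -S.ly p := by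
  have hv : 0 < (q.1 - p.1)^2 + (q.2 - p.2)^2 := by
    rcases (not_and_or.mp (fun h : q.1 - p.1 = 0 ∧ q.2 - p.2 = 0 =>
      hpq (Prod.ext (by linarith [h.1]) (by linarith [h.2])))) with h | h
    · have h1 : (q.1 - p.1)^2 ≠ 0 := pow_ne_zero 2 h
      have h2 := sq_nonneg (q.1 - p.1)
      nlinarith [sq_nonneg (q.2 - p.2), lt_of_le_of_ne h2 (Ne.symm h1)]
    · have h1 : (q.2 - p.2)^2 ≠ 0 := pow_ne_zero 2 h
      have h2 := sq_nonneg (q.2 - p.2)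
      nlinarith [sq_nonneg (q.1 - p.1), lt_of_le_of_ne h2 (Ne.symm h1)]
  set v1 : ℝ := q.1 - p.1 with hv1
  set v2 : ℝ := q.2 - p.2 with hv2
  set f : ℝ → ℝ := fun θ => (v1^2 - v2^2) * Real.cos (2*θ) + 2*v1*v2 * Real.sin (2*θ) with hfdef
  have hcont : Continuous f := by fun_prop
  have hf0 : f 0 = v1^2 - v2^2 := by simp [hfdef]
  have hfpi : f (Real.pi/2) = -(v1^2 - v2^2) := by
    have h2 : 2 * (Real.pi/2) = Real.pi := by ring
    simp [hfdef, h2, Real.cos_pi, Real.sin_pi]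
  have hle : (0:ℝ) ≤ Real.pi/2 := by positivity
  have hivt : ∃ θ ∈ Set.Icc (0:ℝ) (Real.pi/2), f θ = 0 := by
    rcases le_total (f 0) 0 with h | h
    · have h0 : (0:ℝ) ∈ Set.Icc (f 0) (f (Real.pi/2)) := ⟨h, by rw [hfpi]; linarith [hf0 ▸ h]⟩
      obtain ⟨θ, hθ, hfθ⟩ := intermediate_value_Icc hle hcont.continuousOn h0
      exact ⟨θ, hθ, hfθ⟩
    · have h0 : (0:ℝ) ∈ Set.Icc (f (Real.pi/2)) (f 0) := ⟨by rw [hfpi]; linarith [hf0 ▸ h], h⟩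
      obtain ⟨θ, hθ, hfθ⟩ := intermediate_value_Icc' hle hcont.continuousOn h0
      exact ⟨θ, hθ, hfθ⟩
  obtain ⟨θ₀, hθ₀mem, hθ₀⟩ := hivt
  have hex : ∃ θ, 0 ≤ θ ∧ θ < Real.pi/2 ∧ f θ = 0 := by
    rcases lt_or_eq_of_le hθ₀mem.2 with h | h
    · exact ⟨θ₀, hθ₀mem.1, h, hθ₀⟩
    · refine ⟨0, le_refl 0, by positivity, ?_⟩
      rw [hf0]
      rw [h] at hθ₀
      rw [hfpi] at hθ₀
      linarith
  obtain ⟨θ, h0θ, hθπ, hfθ⟩ := hex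
  set c := Real.cos θ with hc
  set s := Real.sin θ with hs
  have hcs : s^2 + c^2 = 1 := Real.sin_sq_add_cos_sq θ
  have e1 : Real.cos (2*θ) = c^2 - s^2 := by rw [hc, hs]; exact Real.cos_two_mul' θ
  have e2 : Real.sin (2*θ) = 2*s*c := by rw [hc, hs]; rw [Real.sin_two_mul]
  rw [hfdef] at hfθ
  simp only [e1, e2] at hfθ
  have ha2b2 : (v1*c + v2*s)^2 = (-(v1)*s + v2*c)^2 := by linear_combination hfθ
  have hsum : (v1*c + v2*s)^2 + (-(v1)*s + v2*c)^2 = v1^2 + v2^2 := by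
    linear_combination (v1^2 + v2^2) * hcs
  have ha : v1*c + v2*s ≠ 0 := by
    intro h
    rw [h] at ha2b2 hsum
    nlinarith
  set S : Square := ⟨((p.1 + q.1)/2, (p.2 + q.2)/2), |v1*c + v2*s|/2, θ⟩ with hS
  have hr : 0 < S.r := by
    have : 0 < |v1*c + v2*s| := abs_pos.mpr ha
    show 0 < |v1*c + v2*s|/2
    linarith
  have hlxp : S.lx p = -((v1*c + v2*s)/2) := by
    show (p.1 - (p.1 + q.1)/2) * Real.cos θ + (p.2 - (p.2 + q.2)/2) * Real.sin θ = _
    rw [hv1, hv2, ← hc, ← hs]; ring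
  have hlyp : S.ly p = -((-(v1)*s + v2*c)/2) := by
    show -(p.1 - (p.1 + q.1)/2) * Real.sin θ + (p.2 - (p.2 + q.2)/2) * Real.cos θ = _
    rw [hv1, hv2, ← hc, ← hs]; ring
  have habs : |v1*c + v2*s| = |(-(v1)*s + v2*c)| := by
    rw [← Real.sqrt_sq_eq_abs, ← Real.sqrt_sq_eq_abs, ha2b2]
  refine ⟨S, ⟨hr.le, h0θ, hθπ⟩, hr, ?_, ?_, ?_, ?_⟩
  · rw [hlxp, abs_neg, abs_div]
    norm_num
    rfl
  · rw [hlyp, abs_neg, abs_div, ← habs]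
    norm_num
    rfl
  · rw [hlxp]
    show (q.1 - (p.1 + q.1)/2) * Real.cos θ + (q.2 - (p.2 + q.2)/2) * Real.sin θ = _
    rw [hv1, hv2, ← hc, ← hs]; ring
  · rw [hlyp]
    show -(q.1 - (p.1 + q.1)/2) * Real.sin θ + (q.2 - (p.2 + q.2)/2) * Real.cos θ = _
    rw [hv1, hv2, ← hc, ← hs]; ring

private lemma corner_sides (S : Square) (p q : ℝ × ℝ) (hr : 0 < S.r)
    (hxp : |S.lx p| = S.r) (hyp : |S.ly p| = S.r)
    (hxq : S.lx q = -S.lx p) (hyq : S.ly q = -S.ly p) :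
    ∃ A B : SqSide, A ≠ B ∧ A.opp ≠ B.opp ∧
      S.OnSide A p ∧ S.OnSide B p ∧ S.OnSide A.opp q ∧ S.OnSide B.opp q ∧
      (∀ a, S.OnSide a p → a = A ∨ a = B) ∧
      (∀ a, S.OnSide a q → a = A.opp ∨ a = B.opp) := by
  have hxq' : |S.lx q| = S.r := by rw [hxq, abs_neg, hxp]
  have hyq' : |S.ly q| = S.r := by rw [hyq, abs_neg, hyp]
  rcases (abs_eq hr.le).mp hxp with hx | hx <;>
    rcases (abs_eq hr.le).mp hyp with hy | hy
  · refine ⟨.right, .top, by simp, by simp [SqSide.opp], ⟨hx, hyp.le⟩, ⟨hy, hxp.le⟩,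
      ⟨by rw [hxq, hx], hyq'.le⟩, ⟨by rw [hyq, hy], hxq'.le⟩, ?_, ?_⟩
    · intro a ha
      cases a with
      | right => exact Or.inl rfl
      | top => exact Or.inr rfl
      | left => exfalso; have h' := ha.1; rw [hx] at h'; linarith
      | bottom => exfalso; have h' := ha.1; rw [hy] at h'; linarith
    · intro a ha
      cases a with
      | left => exact Or.inl rfl
      | bottom => exact Or.inr rfl
      | right => exfalso; have h' := ha.1; rw [hxq, hx] at h'; linarith
      | top => exfalso; have h' := ha.1; rw [hyq, hy] at h'; linarith
  · refine ⟨.right, .bottom, by simp, by simp [SqSide.opp], ⟨hx, hyp.le⟩, ⟨hy, hxp.le⟩,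
      ⟨by rw [hxq, hx], hyq'.le⟩, ⟨by rw [hyq, hy]; ring, hxq'.le⟩, ?_, ?_⟩
    · intro a ha
      cases a with
      | right => exact Or.inl rfl
      | bottom => exact Or.inr rfl
      | left => exfalso; have h' := ha.1; rw [hx] at h'; linarith
      | top => exfalso; have h' := ha.1; rw [hy] at h'; linarith
    · intro a ha
      cases a with
      | left => exact Or.inl rfl
      | top => exact Or.inr rfl
      | right => exfalso; have h' := ha.1; rw [hxq, hx] at h'; linarith
      | bottom => exfalso; have h' := ha.1; rw [hyq, hy] at h'; linarith
  · refine ⟨.left, .top, by simp, by simp [SqSide.opp], ⟨hx, hyp.le⟩, ⟨hy, hxp.le⟩,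
      ⟨by rw [hxq, hx]; ring, hyq'.le⟩, ⟨by rw [hyq, hy], hxq'.le⟩, ?_, ?_⟩
    · intro a ha
      cases a with
      | left => exact Or.inl rfl
      | top => exact Or.inr rfl
      | right => exfalso; have h' := ha.1; rw [hx] at h'; linarith
      | bottom => exfalso; have h' := ha.1; rw [hy] at h'; linarith
    · intro a ha
      cases a with
      | right => exact Or.inl rfl
      | bottom => exact Or.inr rfl
      | left => exfalso; have h' := ha.1; rw [hxq, hx] at h'; linarith
      | top => exfalso; have h' := ha.1; rw [hyq, hy] at h'; linarith
  · refine ⟨.left, .bottom, by simp, by simp [SqSide.opp], ⟨hx, hyp.le⟩, ⟨hy, hxp.le⟩,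
      ⟨by rw [hxq, hx]; ring, hyq'.le⟩, ⟨by rw [hyq, hy]; ring, hxq'.le⟩, ?_, ?_⟩
    · intro a ha
      cases a with
      | left => exact Or.inl rfl
      | bottom => exact Or.inr rfl
      | right => exfalso; have h' := ha.1; rw [hx] at h'; linarith
      | top => exfalso; have h' := ha.1; rw [hy] at h'; linarith
    · intro a ha
      cases a with
      | right => exact Or.inl rfl
      | top => exact Or.inr rfl
      | left => exfalso; have h' := ha.1; rw [hxq, hx] at h'; linarith
      | bottom => exfalso; have h' := ha.1; rw [hyq, hy] at h'; linarith

private lemma key_square (P : Finset (ℝ × ℝ)) (p q : ℝ × ℝ) (hp : p ∈ P) (hq : q ∈ P)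
    (hpq : p ≠ q) (hmin : ∀ x ∈ P, x ≠ p → sqDist p q ≤ sqDist p x) :
    ∃ S : Square, IsNontrivial4Square P S ∧ S.Mem p ∧
      ∀ x ∈ P, S.Mem x → x = p ∨ x = q := by
  obtain ⟨S, hval, hr, hxp, hyp, hxq, hyq⟩ := exists_diag p q hpq
  have hmemp : S.Mem p := ⟨hxp.le, hyp.le⟩
  have hclosed : ∀ x, S.Mem x → sqDist x p + sqDist x q ≤ sqDist p q := by
    intro x hx
    have h1 := lxly_sq S x p
    have h2 := lxly_sq S x q
    have h3 := lxly_sq S p q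
    rw [hxq, hyq] at h2 h3
    have e1 : (S.lx p)^2 = S.r^2 := by rw [← sq_abs, hxp]
    have e2 : (S.ly p)^2 = S.r^2 := by rw [← sq_abs, hyp]
    obtain ⟨hb1, hb2⟩ := hx
    have b1 := abs_le.mp hb1
    have b2 := abs_le.mp hb2
    nlinarith [b1.1, b1.2, b2.1, b2.2]
  have honly : ∀ x ∈ P, S.Mem x → x = p ∨ x = q := by
    intro x hxP hxm
    by_cases hxp' : x = p
    · exact Or.inl hxp'
    · refine Or.inr (eq_of_sqDist_nonpos ?_)
      have h1 := hmin x hxP hxp'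
      have h2 := hclosed x hxm
      have h3 := sqDist_comm x p
      linarith
  have hempty : IsEmptySquare P S := by
    refine ⟨hval, ?_⟩
    intro x hxP hint
    have hxm : S.Mem x := ⟨hint.1.le, hint.2.le⟩
    have hxqr : |S.lx q| = S.r := by rw [hxq, abs_neg, hxp]
    rcases honly x hxP hxm with rfl | rfl
    · exact absurd hxp (ne_of_lt hint.1)
    · exact absurd hxqr (ne_of_lt hint.1)
  obtain ⟨A, B, hAB, hABo, hAp, hBp, hAq, hBq, hclp, hclq⟩ :=
    corner_sides S p q hr hxp hyp hxq hyq
  have hset : contactPairs P S =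
      {((p, A) : (ℝ × ℝ) × SqSide), (p, B), (q, A.opp), (q, B.opp)} := by
    ext ⟨x, a⟩
    simp only [contactPairs, Set.mem_setOf_eq, Set.mem_insert_iff, Set.mem_singleton_iff,
      Prod.mk.injEq]
    constructor
    · rintro ⟨hxP, hOn⟩
      rcases honly x hxP (mem_of_onSide S hr.le a x hOn) with rfl | rfl
      · rcases hclp a hOn with rfl | rfl
        · exact Or.inl ⟨rfl, rfl⟩
        · exact Or.inr (Or.inl ⟨rfl, rfl⟩)
      · rcases hclq a hOn with rfl | rfl
        · exact Or.inr (Or.inr (Or.inl ⟨rfl, rfl⟩))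
        · exact Or.inr (Or.inr (Or.inr ⟨rfl, rfl⟩))
    · rintro (⟨rfl, rfl⟩ | ⟨rfl, rfl⟩ | ⟨rfl, rfl⟩ | ⟨rfl, rfl⟩)
      exacts [⟨hp, hAp⟩, ⟨hp, hBp⟩, ⟨hq, hAq⟩, ⟨hq, hBq⟩]
  have hcount : (contactPairs P S).ncard = 4 := by
    rw [hset]
    rw [Set.ncard_insert_of_notMem (by simp [Prod.ext_iff, hAB, hpq]),
      Set.ncard_insert_of_notMem (by simp [Prod.ext_iff, hpq]),
      Set.ncard_pair (by simp [Prod.ext_iff, hABo])]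
  exact ⟨S, ⟨⟨hempty, hcount⟩, hr⟩, hmemp, honly⟩

end Aux

/-- There is a constant `c > 0` such that every finite set `P` of
`n ≥ 3` points in general position admits at least `c * n` nontrivial 4-squares. -/
theorem linear_le_numNontrivial4Squares :
    ∃ c : ℝ, 0 < c ∧
      ∀ P : Finset (ℝ × ℝ), 3 ≤ P.card → GenPos P →
        ∃ T : Finset Square, (∀ S ∈ T, IsNontrivial4Square P S) ∧
          c * (P.card : ℝ) ≤ (T.card : ℝ) := by
  refine ⟨1/2, by norm_num, ?_⟩
  intro P hcard hgen
  have hex : ∀ p : {x // x ∈ P}, ∃ S : Square,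
      (IsNontrivial4Square P S ∧ S.Mem p.1) ∧
      ∃ qq, ∀ x ∈ P, S.Mem x → x = p.1 ∨ x = qq := by
    rintro ⟨p, hp⟩
    have hne : (P.erase p).Nonempty := by
      rw [← Finset.card_pos, Finset.card_erase_of_mem hp]; omega
    obtain ⟨q, hqe, hminq⟩ := Finset.exists_min_image (P.erase p) (fun x => sqDist p x) hne
    have hqP : q ∈ P := Finset.mem_of_mem_erase hqe
    have hqp : p ≠ q := (Finset.ne_of_mem_erase hqe).symm
    obtain ⟨S, h1, h2, h3⟩ := key_square P p q hp hqP hqp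
      (fun x hx hxp => hminq x (Finset.mem_erase.mpr ⟨hxp, hx⟩))
    exact ⟨S, ⟨h1, h2⟩, q, h3⟩
  choose f hf1 hf2 using hex
  classical
  refine ⟨P.attach.image f, ?_, ?_⟩
  · intro S hS
    obtain ⟨p, hpat, rfl⟩ := Finset.mem_image.mp hS
    exact (hf1 p).1
  · have hcb : P.attach.card ≤ 2 * (P.attach.image f).card := by
      apply Finset.card_le_mul_card_image
      intro a ha
      obtain ⟨p0, hp0, hfp0⟩ := Finset.mem_image.mp ha
      obtain ⟨q0, hq0⟩ := hf2 p0
      calc (P.attach.filter (fun x => f x = a)).card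
          ≤ ({p0.1, q0} : Finset (ℝ × ℝ)).card := by
            apply Finset.card_le_card_of_injOn (fun x => x.1)
            · intro x hx
              have hfx : f x = a := (Finset.mem_filter.mp hx).2
              have hm : (f p0).Mem x.1 := by
                rw [hfp0, ← hfx]; exact (hf1 x).2
              rcases hq0 x.1 x.2 hm with h | h <;> simp [h]
            · intro x _ y _ h
              exact Subtype.ext h
        _ ≤ 2 := by
            refine le_trans (Finset.card_insert_le _ _) ?_
            simp
    rw [Finset.card_attach] at hcb
    have hcb' : (P.card : ℝ) ≤ 2 * ((P.attach.image f).card : ℝ) := by exact_mod_cast hcb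
    linarith
end

section
/- There exists a constant c > 0 such that for every integer n ≥ 4 there is a set P_n of n points in the plane in general position for which, for each k ∈ {2, 3, 4}, the number of (4,k)-squares among P_n is at least c·n²; consequently the number of nontrivial 4-squares among P_n is at least c·n². -/
open Real Set

/-!
The points `p_k = (k, -ε k²)`, `1 ≤ k ≤ n`, `ε = 1/(8n²)`, lie on a very flat concave parabola:
the chord `p_a p_b` has slope `-ε(a+b) ∈ [-1/(4n), 0)`. So in an orientation `θ ∈ [0, π/2)` no
two of them share a horizontal side, and two of them share a vertical line only if
`cot θ = ε(a+b)`. Then no third point lies on that line, the square has side at least `1`, and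
in that orientation any two points are within `1/4` of each other horizontally, so the opposite
side carries no point. Hence every square has at most four contact pairs.

Conversely, for `i < j` rotate so that `p_i, p_j` share a vertical line: the points strictly
between them fall to its right, all others to its left, and a larger index means a lower point.
The square with that line as right side and top and bottom sides through `p_l` and `p_h`,
`l ∈ {i - 1, i}`, `h ∈ {j, j + 1}`, is empty with contact pairs `(p_l, top)`, `(p_i, right)`,
`(p_j, right)`, `(p_h, bottom)`: a `(4, k)`-square with `k = 2 + (i - l) + (h - j)`. Taking
`2 ≤ i ≤ m + 1 < j ≤ 2m + 1` with `m = ⌊n/4⌋` gives `m² ≥ n²/64` of them for each `k`.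
-/

instance : Fintype SqSide :=
  ⟨{.top, .right, .bottom, .left}, fun a => by cases a <;> simp⟩

lemma SqSide.sum_univ {M : Type*} [AddCommMonoid M] (f : SqSide → M) :
    ∑ a, f a = f .top + f .right + f .bottom + f .left := by
  show ∑ a ∈ {.top, .right, .bottom, .left}, f a = _
  simp [add_assoc]

namespace Square

lemma Valid.cos_pos {S : Square} (hS : S.Valid) : 0 < cos S.θ :=
  cos_pos_of_mem_Ioo ⟨by linarith [hS.2.1, pi_pos], hS.2.2⟩

lemma Valid.sin_nonneg {S : Square} (hS : S.Valid) : 0 ≤ sin S.θ :=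
  sin_nonneg_of_nonneg_of_le_pi hS.2.1 (by linarith [hS.2.2, pi_pos])

lemma lx_sub_lx (S : Square) (p q : ℝ × ℝ) :
    S.lx q - S.lx p = (q.1 - p.1) * cos S.θ + (q.2 - p.2) * sin S.θ := by
  simp only [lx]; ring

lemma ly_sub_ly (S : Square) (p q : ℝ × ℝ) :
    S.ly q - S.ly p = -(q.1 - p.1) * sin S.θ + (q.2 - p.2) * cos S.θ := by
  simp only [ly]; ring

lemma sq_lx_sub_add_sq_ly_sub (S : Square) (p q : ℝ × ℝ) :
    (S.lx q - S.lx p) ^ 2 + (S.ly q - S.ly p) ^ 2 = (q.1 - p.1) ^ 2 + (q.2 - p.2) ^ 2 := by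
  rw [lx_sub_lx, ly_sub_ly]
  linear_combination ((q.1 - p.1) ^ 2 + (q.2 - p.2) ^ 2) * sin_sq_add_cos_sq S.θ

end Square

open scoped Classical in
lemma ncard_contactPairs (P : Finset (ℝ × ℝ)) (S : Square) :
    (contactPairs P S).ncard = ∑ a, (P.filter (S.OnSide a)).card := by
  have : contactPairs P S = ↑((P ×ˢ Finset.univ).filter fun pa => S.OnSide pa.2 pa.1) := by
    ext; simp [contactPairs]
  rw [this, Set.ncard_coe_finset, Finset.card_filter, Finset.sum_product_right]
  simp only [Finset.card_filter]

noncomputable section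

namespace ParabolaPoints

open scoped Classical

variable {n : ℕ}

def eps (n : ℕ) : ℝ := 1 / (8 * (n : ℝ) ^ 2)

def pt (n k : ℕ) : ℝ × ℝ := (k, -eps n * k ^ 2)

def ptSet (n : ℕ) : Finset (ℝ × ℝ) := (Finset.Icc 1 n).image (pt n)

lemma eps_nonneg (n : ℕ) : 0 ≤ eps n := by
  unfold eps; positivity

lemma eps_pos (hn : n ≠ 0) : 0 < eps n := by
  unfold eps; positivity

lemma eps_mul_sq (hn : n ≠ 0) : eps n * n ^ 2 = 1 / 8 := by
  unfold eps; field_simp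

lemma eps_mul_lt_one (hn : n ≠ 0) {d : ℝ} (hd : d ≤ n) : eps n * d < 1 := by
  have : (1 : ℝ) ≤ n := by exact_mod_cast Nat.one_le_iff_ne_zero.mpr hn
  nlinarith [eps_pos hn, eps_mul_sq hn]

lemma pt_injective (n : ℕ) : Function.Injective (pt n) := fun a b h => by
  simpa [pt] using congrArg Prod.fst h

lemma card_ptSet (n : ℕ) : (ptSet n).card = n := by
  rw [ptSet, Finset.card_image_of_injective _ (pt_injective n), Nat.card_Icc]; omega

lemma mem_ptSet {p : ℝ × ℝ} : p ∈ ptSet n ↔ ∃ k, (1 ≤ k ∧ k ≤ n) ∧ pt n k = p := by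
  simp [ptSet]

lemma card_filter_ptSet (q : ℝ × ℝ → Prop) :
    ((ptSet n).filter q).card = ((Finset.Icc 1 n).filter fun k => q (pt n k)).card := by
  rw [ptSet, Finset.filter_image, Finset.card_image_of_injective _ (pt_injective n)]

section GeneralPosition

variable {S : Square}

lemma lx_pt_sub (S : Square) (a b : ℕ) :
    S.lx (pt n b) - S.lx (pt n a) = (b - a) * (cos S.θ - eps n * (a + b) * sin S.θ) := by
  rw [S.lx_sub_lx]; simp only [pt]; ring

lemma ly_pt_sub (S : Square) (a b : ℕ) :
    S.ly (pt n b) - S.ly (pt n a) = -(b - a) * (sin S.θ + eps n * (a + b) * cos S.θ) := by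
  rw [S.ly_sub_ly]; simp only [pt]; ring

lemma ly_pt_injective (hn : n ≠ 0) (hS : S.Valid) : Function.Injective fun k => S.ly (pt n k) := by
  intro a b h
  by_contra hab
  have hab' : (b : ℝ) - a ≠ 0 := sub_ne_zero.mpr (by exact_mod_cast Ne.symm hab)
  have hsum : (0 : ℝ) < a + b := by exact_mod_cast (by omega : 0 < a + b)
  have hfactor := ly_pt_sub (n := n) S a b
  rw [show S.ly (pt n b) = S.ly (pt n a) from h.symm, sub_self, eq_comm, mul_eq_zero] at hfactor
  have := mul_pos (mul_pos (eps_pos hn) hsum) hS.cos_pos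
  rcases hfactor with h0 | h0
  · exact hab' (neg_eq_zero.mp h0)
  · linarith [hS.sin_nonneg]

lemma cos_eq_of_lx_pt_eq {a b : ℕ} (hab : a ≠ b) (h : S.lx (pt n a) = S.lx (pt n b)) :
    cos S.θ = eps n * (a + b) * sin S.θ := by
  have hab' : (b : ℝ) - a ≠ 0 := sub_ne_zero.mpr (by exact_mod_cast Ne.symm hab)
  have hfactor := lx_pt_sub (n := n) S a b
  rw [h, sub_self, eq_comm, mul_eq_zero] at hfactor
  exact sub_eq_zero.mp (hfactor.resolve_left hab')

lemma lx_pt_ne_of_lx_pt_eq (hn : n ≠ 0) (hS : S.Valid) {a b c : ℕ} (hab : a ≠ b) (hac : a ≠ c)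
    (hbc : b ≠ c) (hb : S.lx (pt n a) = S.lx (pt n b)) : S.lx (pt n a) ≠ S.lx (pt n c) := by
  intro hc
  have hbc' : (b : ℝ) - c ≠ 0 := sub_ne_zero.mpr (by exact_mod_cast hbc)
  have key : eps n * (b - c) * sin S.θ = 0 := by
    linear_combination cos_eq_of_lx_pt_eq hac hc - cos_eq_of_lx_pt_eq hab hb
  have hsin : sin S.θ = 0 := by simpa [(eps_pos hn).ne', hbc'] using key
  have := cos_eq_of_lx_pt_eq hab hb
  rw [hsin, mul_zero] at this
  exact hS.cos_pos.ne' this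

lemma half_le_r_of_lx_pt_eq {a b : ℕ} (hab : a ≠ b) (h : S.lx (pt n a) = S.lx (pt n b))
    (ha : |S.ly (pt n a)| ≤ S.r) (hb : |S.ly (pt n b)| ≤ S.r) : 1 / 2 ≤ S.r := by
  have hdist := S.sq_lx_sub_add_sq_ly_sub (pt n a) (pt n b)
  rw [h, sub_self, show (pt n b).1 - (pt n a).1 = b - a by simp [pt]] at hdist
  have hba : 1 ≤ |(b : ℝ) - a| := by
    have : 1 ≤ |(b : ℤ) - a| := Int.one_le_abs (sub_ne_zero.mpr (by exact_mod_cast hab.symm))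
    exact_mod_cast this
  have hly : 1 ≤ |S.ly (pt n b) - S.ly (pt n a)| := by
    rw [← one_le_sq_iff_one_le_abs] at hba ⊢
    nlinarith [sq_nonneg ((pt n b).2 - (pt n a).2)]
  linarith [abs_sub (S.ly (pt n b)) (S.ly (pt n a))]

lemma abs_lx_pt_sub_le (hn : n ≠ 0) (hS : S.Valid) {a b c d : ℕ}
    (hcd : cos S.θ = eps n * (c + d) * sin S.θ) (ha : a ≤ n) (hb : b ≤ n) (hc : c ≤ n)
    (hd : d ≤ n) : |S.lx (pt n b) - S.lx (pt n a)| ≤ 1 / 4 := by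
  have hba : |(b : ℝ) - a| ≤ n :=
    abs_sub_le_of_nonneg_of_le (by positivity) (by exact_mod_cast hb) (by positivity)
      (by exact_mod_cast ha)
  have hcdab : |(c : ℝ) + d - (a + b)| ≤ 2 * n :=
    abs_sub_le_of_nonneg_of_le (by positivity) (by norm_cast; omega) (by positivity)
      (by norm_cast; omega)
  have hε := eps_nonneg n
  have hεsin : 0 ≤ eps n * sin S.θ := mul_nonneg hε hS.sin_nonneg
  calc |S.lx (pt n b) - S.lx (pt n a)|
      = |(b : ℝ) - a| * |(c : ℝ) + d - (a + b)| * (eps n * sin S.θ) := by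
        rw [lx_pt_sub, hcd, ← abs_mul, ← abs_of_nonneg hεsin, ← abs_mul]; ring_nf
    _ ≤ n * (2 * n) * (eps n * 1) := by gcongr; exact sin_le_one _
    _ = 1 / 4 := by linear_combination 2 * eps_mul_sq hn

lemma card_le_one_of_ly_eq (hn : n ≠ 0) (hS : S.Valid) {s : Finset (ℝ × ℝ)} (hs : s ⊆ ptSet n)
    {y : ℝ} (hy : ∀ p ∈ s, S.ly p = y) : s.card ≤ 1 := by
  refine Finset.card_le_one.mpr fun p hp q hq => ?_
  obtain ⟨a, -, rfl⟩ := mem_ptSet.mp (hs hp)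
  obtain ⟨b, -, rfl⟩ := mem_ptSet.mp (hs hq)
  rw [ly_pt_injective hn hS ((hy _ hp).trans (hy _ hq).symm)]

lemma card_le_two_of_lx_eq (hn : n ≠ 0) (hS : S.Valid) {s : Finset (ℝ × ℝ)} (hs : s ⊆ ptSet n)
    {x : ℝ} (hx : ∀ p ∈ s, S.lx p = x) : s.card ≤ 2 := by
  by_contra! h
  obtain ⟨p, hp, q, hq, u, hu, hpq, hpu, hqu⟩ := Finset.two_lt_card.mp h
  obtain ⟨a, -, rfl⟩ := mem_ptSet.mp (hs hp)
  obtain ⟨b, -, rfl⟩ := mem_ptSet.mp (hs hq)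
  obtain ⟨c, -, rfl⟩ := mem_ptSet.mp (hs hu)
  exact lx_pt_ne_of_lx_pt_eq hn hS (ne_of_apply_ne _ hpq) (ne_of_apply_ne _ hpu)
    (ne_of_apply_ne _ hqu) ((hx _ hp).trans (hx _ hq).symm) ((hx _ hp).trans (hx _ hu).symm)

lemma abs_lx_sub_lt_of_lx_eq (hn : n ≠ 0) (hS : S.Valid) {p q : ℝ × ℝ} (hp : p ∈ ptSet n)
    (hq : q ∈ ptSet n) (hpq : p ≠ q) (hlx : S.lx p = S.lx q) (hpr : |S.ly p| ≤ S.r)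
    (hqr : |S.ly q| ≤ S.r) : ∀ u ∈ ptSet n, ∀ v ∈ ptSet n, |S.lx v - S.lx u| < 2 * S.r := by
  obtain ⟨c, ⟨-, hcn⟩, rfl⟩ := mem_ptSet.mp hp
  obtain ⟨d, ⟨-, hdn⟩, rfl⟩ := mem_ptSet.mp hq
  have hcd : c ≠ d := ne_of_apply_ne _ hpq
  have hr := half_le_r_of_lx_pt_eq hcd hlx hpr hqr
  intro u hu v hv
  obtain ⟨a, ⟨-, han⟩, rfl⟩ := mem_ptSet.mp hu
  obtain ⟨b, ⟨-, hbn⟩, rfl⟩ := mem_ptSet.mp hv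
  linarith [abs_lx_pt_sub_le hn hS (cos_eq_of_lx_pt_eq hcd hlx) han hbn hcn hdn]

lemma card_left_add_card_right_le_two (hn : n ≠ 0) (hS : S.Valid) :
    ((ptSet n).filter (S.OnSide .left)).card + ((ptSet n).filter (S.OnSide .right)).card ≤ 2 := by
  set L := (ptSet n).filter (S.OnSide .left)
  set R := (ptSet n).filter (S.OnSide .right)
  have hL : L.card ≤ 2 := card_le_two_of_lx_eq hn hS (Finset.filter_subset _ _)
    fun p hp => (Finset.mem_filter.mp hp).2.1
  have hR : R.card ≤ 2 := card_le_two_of_lx_eq hn hS (Finset.filter_subset _ _)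
    fun p hp => (Finset.mem_filter.mp hp).2.1
  have hopp : ∀ p ∈ L, ∀ q ∈ R, |S.lx q - S.lx p| = 2 * S.r := by
    intro p hp q hq
    rw [(Finset.mem_filter.mp hq).2.1, (Finset.mem_filter.mp hp).2.1, sub_neg_eq_add,
      ← two_mul, abs_of_nonneg (by linarith [hS.1])]
  by_cases hL2 : 2 ≤ L.card
  · suffices R = ∅ by simp [this, hL]
    refine Finset.eq_empty_of_forall_notMem fun q hq => ?_
    obtain ⟨p, hp, p', hp', hpp'⟩ := Finset.one_lt_card.mp hL2
    rw [Finset.mem_filter] at hp hp'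
    have := abs_lx_sub_lt_of_lx_eq hn hS hp.1 hp'.1 hpp' (hp.2.1.trans hp'.2.1.symm) hp.2.2
      hp'.2.2 p hp.1 q (Finset.mem_filter.mp hq).1
    exact this.ne (hopp p (Finset.mem_filter.mpr hp) q hq)
  by_cases hR2 : 2 ≤ R.card
  · suffices L = ∅ by simp [this, hR]
    refine Finset.eq_empty_of_forall_notMem fun p hp => ?_
    obtain ⟨q, hq, q', hq', hqq'⟩ := Finset.one_lt_card.mp hR2
    rw [Finset.mem_filter] at hq hq'
    have := abs_lx_sub_lt_of_lx_eq hn hS hq.1 hq'.1 hqq' (hq.2.1.trans hq'.2.1.symm) hq.2.2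
      hq'.2.2 p (Finset.mem_filter.mp hp).1 q hq.1
    exact this.ne (hopp p hp q (Finset.mem_filter.mpr hq))
  omega

theorem genPos_ptSet (hn : n ≠ 0) : GenPos (ptSet n) := by
  intro S hS
  have htop : ((ptSet n).filter (S.OnSide .top)).card ≤ 1 := card_le_one_of_ly_eq hn hS
    (Finset.filter_subset _ _) fun p hp => (Finset.mem_filter.mp hp).2.1
  have hbot : ((ptSet n).filter (S.OnSide .bottom)).card ≤ 1 := card_le_one_of_ly_eq hn hS
    (Finset.filter_subset _ _) fun p hp => (Finset.mem_filter.mp hp).2.1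
  rw [ncard_contactPairs, SqSide.sum_univ]
  linarith [card_left_add_card_right_le_two hn hS]

end GeneralPosition

section Construction

variable {i j : ℕ}

/-- `cot θ` for the orientation `θ` in which `pt n i` and `pt n j` share a vertical line. -/
def slope (n i j : ℕ) : ℝ := eps n * (i + j)

def slopeNorm (n i j : ℕ) : ℝ := √(1 + slope n i j ^ 2)

def xOffset (n i j : ℕ) (x : ℝ) : ℝ := eps n * (x - i) * (j - x)

def yOffset (n i j : ℕ) (x : ℝ) : ℝ := (x - i) * (1 + eps n * slope n i j * (x + i))

/-- The square of radius `r` in orientation `π/2 - arctan (slope n i j)`, placed so that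
`pt n i` has local coordinates `(r, β)`. -/
def frameSq (n i j : ℕ) (r β : ℝ) : Square where
  center := (i - (r * slope n i j - β) / slopeNorm n i j,
    -eps n * i ^ 2 - (r + β * slope n i j) / slopeNorm n i j)
  r := r
  θ := π / 2 - arctan (slope n i j)

lemma slopeNorm_pos : 0 < slopeNorm n i j := Real.sqrt_pos.mpr (by positivity)

lemma sq_slopeNorm : slopeNorm n i j ^ 2 = 1 + slope n i j ^ 2 := Real.sq_sqrt (by positivity)

lemma cos_frameSq (r β : ℝ) : cos (frameSq n i j r β).θ = slope n i j / slopeNorm n i j := by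
  rw [frameSq, cos_pi_div_two_sub, sin_arctan, slopeNorm]

lemma sin_frameSq (r β : ℝ) : sin (frameSq n i j r β).θ = 1 / slopeNorm n i j := by
  rw [frameSq, sin_pi_div_two_sub, cos_arctan, slopeNorm]

lemma lx_frameSq_pt (r β : ℝ) (k : ℕ) :
    (frameSq n i j r β).lx (pt n k) = xOffset n i j k / slopeNorm n i j + r := by
  have hw := (slopeNorm_pos (n := n) (i := i) (j := j)).ne'
  have hs : slope n i j = eps n * (i + j) := rfl
  rw [Square.lx, cos_frameSq, sin_frameSq]
  simp only [frameSq, xOffset, pt]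
  field_simp
  linear_combination -r * sq_slopeNorm (n := n) (i := i) (j := j) +
    ((k : ℝ) - i) * slopeNorm n i j * hs

lemma ly_frameSq_pt (r β : ℝ) (k : ℕ) :
    (frameSq n i j r β).ly (pt n k) = β - yOffset n i j k / slopeNorm n i j := by
  have hw := (slopeNorm_pos (n := n) (i := i) (j := j)).ne'
  rw [Square.ly, cos_frameSq, sin_frameSq]
  simp only [frameSq, yOffset, pt]
  field_simp
  linear_combination -β * sq_slopeNorm (n := n) (i := i) (j := j)

lemma yOffset_sub (x y : ℝ) :
    yOffset n i j y - yOffset n i j x = (y - x) * (1 + eps n * slope n i j * (x + y)) := by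
  simp only [yOffset]; ring

lemma yOffset_strictMonoOn : StrictMonoOn (yOffset n i j) (Set.Ici 0) := by
  intro x (hx : 0 ≤ x) y (hy : 0 ≤ y) hxy
  have : 0 ≤ eps n * slope n i j * (x + y) := by
    have := eps_nonneg n; unfold slope; positivity
  nlinarith [yOffset_sub (n := n) (i := i) (j := j) x y]

lemma yOffset_eq_iff {k m : ℕ} : yOffset n i j k = yOffset n i j m ↔ k = m := by
  rw [yOffset_strictMonoOn.eq_iff_eq (Set.mem_Ici.mpr k.cast_nonneg)
    (Set.mem_Ici.mpr m.cast_nonneg), Nat.cast_inj]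

lemma yOffset_le_iff {k m : ℕ} : yOffset n i j k ≤ yOffset n i j m ↔ k ≤ m := by
  rw [yOffset_strictMonoOn.le_iff_le (Set.mem_Ici.mpr k.cast_nonneg)
    (Set.mem_Ici.mpr m.cast_nonneg), Nat.cast_le]

lemma xOffset_eq_zero_iff (hn : n ≠ 0) {k : ℕ} : xOffset n i j k = 0 ↔ k = i ∨ k = j := by
  simp [xOffset, (eps_pos hn).ne', sub_eq_zero, eq_comm]

lemma xOffset_nonpos_iff (hn : n ≠ 0) (hij : i < j) {k : ℕ} :
    xOffset n i j k ≤ 0 ↔ k ≤ i ∨ j ≤ k := by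
  have hε := eps_pos hn
  have hij' : (i : ℝ) < j := by exact_mod_cast hij
  constructor
  · intro h
    by_contra! hk
    have hik : (i : ℝ) < k := by exact_mod_cast hk.1
    have hkj : (k : ℝ) < j := by exact_mod_cast hk.2
    have : 0 < xOffset n i j k := mul_pos (mul_pos hε (sub_pos.mpr hik)) (sub_pos.mpr hkj)
    linarith
  · rintro (hk | hk) <;> have hk' := (Nat.cast_le (α := ℝ)).mpr hk
    · exact mul_nonpos_of_nonpos_of_nonneg (mul_nonpos_of_nonneg_of_nonpos hε.le (by linarith))
        (by linarith)
    · exact mul_nonpos_of_nonneg_of_nonpos (mul_nonneg hε.le (by linarith)) (by linarith)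

lemma yOffset_sub_yOffset_lt_xOffset {l h k : ℕ} (hn : n ≠ 0) (hij : i < j) (hli : l ≤ i)
    (hjh : j ≤ h) (hhn : h ≤ n) (hlk : l ≤ k) (hkh : k ≤ h) :
    yOffset n i j l - yOffset n i j h < xOffset n i j k := by
  have hε := eps_pos hn
  have hli' : (l : ℝ) ≤ i := by exact_mod_cast hli
  have hjh' : (j : ℝ) ≤ h := by exact_mod_cast hjh
  have hlk' : (l : ℝ) ≤ k := by exact_mod_cast hlk
  have hkh' : (k : ℝ) ≤ h := by exact_mod_cast hkh
  have hij' : (i : ℝ) ≤ j := by exact_mod_cast hij.le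
  set d : ℝ := h - l
  have hd : 0 < d := sub_pos.mpr (by exact_mod_cast (hli.trans_lt hij).trans_le hjh)
  have hprod : -d ^ 2 ≤ ((k : ℝ) - i) * (j - k) := by
    nlinarith [mul_nonneg (by linarith : (0 : ℝ) ≤ k - i + d) (by linarith : (0 : ℝ) ≤ j - k + d),
      mul_nonneg (by linarith : (0 : ℝ) ≤ d - (k - i)) (by linarith : (0 : ℝ) ≤ d - (j - k))]
  have hεd : eps n * d < 1 :=
    eps_mul_lt_one hn (by linarith [l.cast_nonneg (α := ℝ), (Nat.cast_le (α := ℝ)).mpr hhn])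
  have hy : d ≤ yOffset n i j h - yOffset n i j l := by
    rw [yOffset_sub]
    have : 0 ≤ eps n * slope n i j * (l + h) := by unfold slope; positivity
    nlinarith
  have hx : -(eps n * d) * d ≤ xOffset n i j k := by
    unfold xOffset; nlinarith
  nlinarith [mul_pos hd (sub_pos.mpr hεd)]

/-- Right side through `pt n i` and `pt n j`, top side through `pt n l`, bottom side through
`pt n h`. -/
def windowSq (n i j l h : ℕ) : Square :=
  frameSq n i j ((yOffset n i j h - yOffset n i j l) / (2 * slopeNorm n i j))
    ((yOffset n i j h + yOffset n i j l) / (2 * slopeNorm n i j))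

structure Admissible (n i j l h : ℕ) : Prop where
  one_le_l : 1 ≤ l
  l_le_i : l ≤ i
  i_le_l_succ : i ≤ l + 1
  i_lt_j : i < j
  j_le_h : j ≤ h
  h_le_j_succ : h ≤ j + 1
  h_le_n : h ≤ n

variable {l h k : ℕ}

lemma Admissible.n_ne_zero (hA : Admissible n i j l h) : n ≠ 0 := by
  have ⟨_, _, _, _, _, _, _⟩ := hA; omega

lemma windowSq_r :
    (windowSq n i j l h).r = (yOffset n i j h - yOffset n i j l) / (2 * slopeNorm n i j) :=
  rfl

lemma lx_windowSq_sub_r : (windowSq n i j l h).lx (pt n k) - (windowSq n i j l h).r =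
    xOffset n i j k / slopeNorm n i j := by
  rw [windowSq, lx_frameSq_pt]; simp only [frameSq]; ring

lemma lx_windowSq_add_r : (windowSq n i j l h).lx (pt n k) + (windowSq n i j l h).r =
    (xOffset n i j k - (yOffset n i j l - yOffset n i j h)) / slopeNorm n i j := by
  rw [windowSq, lx_frameSq_pt]; simp only [frameSq]; field_simp [slopeNorm_pos.ne']; ring

lemma ly_windowSq_sub_r : (windowSq n i j l h).ly (pt n k) - (windowSq n i j l h).r =
    (yOffset n i j l - yOffset n i j k) / slopeNorm n i j := by
  rw [windowSq, ly_frameSq_pt]; simp only [frameSq]; field_simp [slopeNorm_pos.ne']; ring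

lemma ly_windowSq_add_r : (windowSq n i j l h).ly (pt n k) + (windowSq n i j l h).r =
    (yOffset n i j h - yOffset n i j k) / slopeNorm n i j := by
  rw [windowSq, ly_frameSq_pt]; simp only [frameSq]; field_simp [slopeNorm_pos.ne']; ring

lemma ly_windowSq_eq_r_iff :
    (windowSq n i j l h).ly (pt n k) = (windowSq n i j l h).r ↔ k = l := by
  rw [← sub_eq_zero, ly_windowSq_sub_r, div_eq_zero_iff, or_iff_left slopeNorm_pos.ne',
    sub_eq_zero, yOffset_eq_iff, eq_comm]

lemma ly_windowSq_eq_neg_r_iff :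
    (windowSq n i j l h).ly (pt n k) = -(windowSq n i j l h).r ↔ k = h := by
  rw [← sub_eq_zero, sub_neg_eq_add, ly_windowSq_add_r, div_eq_zero_iff,
    or_iff_left slopeNorm_pos.ne', sub_eq_zero, yOffset_eq_iff, eq_comm]

lemma abs_ly_windowSq_le_iff :
    |(windowSq n i j l h).ly (pt n k)| ≤ (windowSq n i j l h).r ↔ l ≤ k ∧ k ≤ h := by
  rw [abs_le, neg_le_iff_add_nonneg, ← sub_nonpos (a := (windowSq n i j l h).ly _),
    ly_windowSq_add_r, ly_windowSq_sub_r, le_div_iff₀ slopeNorm_pos, div_le_iff₀ slopeNorm_pos,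
    zero_mul, sub_nonneg, sub_nonpos, yOffset_le_iff, yOffset_le_iff, and_comm]

lemma lx_windowSq_eq_r_iff (hn : n ≠ 0) :
    (windowSq n i j l h).lx (pt n k) = (windowSq n i j l h).r ↔ k = i ∨ k = j := by
  rw [← sub_eq_zero, lx_windowSq_sub_r, div_eq_zero_iff, or_iff_left slopeNorm_pos.ne',
    xOffset_eq_zero_iff hn]

lemma lx_windowSq_le_r_iff (hn : n ≠ 0) (hij : i < j) :
    (windowSq n i j l h).lx (pt n k) ≤ (windowSq n i j l h).r ↔ k ≤ i ∨ j ≤ k := by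
  rw [← sub_nonpos, lx_windowSq_sub_r, div_le_iff₀ slopeNorm_pos, zero_mul,
    xOffset_nonpos_iff hn hij]

lemma neg_r_lt_lx_windowSq (hA : Admissible n i j l h) (hlk : l ≤ k) (hkh : k ≤ h) :
    -(windowSq n i j l h).r < (windowSq n i j l h).lx (pt n k) := by
  rw [neg_lt_iff_pos_add, lx_windowSq_add_r]
  exact div_pos (sub_pos.mpr (yOffset_sub_yOffset_lt_xOffset hA.n_ne_zero hA.i_lt_j hA.l_le_i
    hA.j_le_h hA.h_le_n hlk hkh)) slopeNorm_pos

lemma onSide_top_windowSq_iff (hA : Admissible n i j l h) :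
    (windowSq n i j l h).OnSide .top (pt n k) ↔ k = l := by
  have ⟨_, _, _, _, _, _, _⟩ := hA
  refine ⟨fun hk => ly_windowSq_eq_r_iff.mp hk.1, ?_⟩
  rintro rfl
  refine ⟨ly_windowSq_eq_r_iff.mpr rfl,
    abs_le.mpr ⟨(neg_r_lt_lx_windowSq hA le_rfl (by omega)).le, ?_⟩⟩
  exact (lx_windowSq_le_r_iff hA.n_ne_zero hA.i_lt_j).mpr (Or.inl hA.l_le_i)

lemma onSide_bottom_windowSq_iff (hA : Admissible n i j l h) :
    (windowSq n i j l h).OnSide .bottom (pt n k) ↔ k = h := by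
  have ⟨_, _, _, _, _, _, _⟩ := hA
  refine ⟨fun hk => ly_windowSq_eq_neg_r_iff.mp hk.1, ?_⟩
  rintro rfl
  refine ⟨ly_windowSq_eq_neg_r_iff.mpr rfl,
    abs_le.mpr ⟨(neg_r_lt_lx_windowSq hA (by omega) le_rfl).le, ?_⟩⟩
  exact (lx_windowSq_le_r_iff hA.n_ne_zero hA.i_lt_j).mpr (Or.inr hA.j_le_h)

lemma onSide_right_windowSq_iff (hA : Admissible n i j l h) :
    (windowSq n i j l h).OnSide .right (pt n k) ↔ k = i ∨ k = j := by
  have ⟨_, _, _, _, _, _, _⟩ := hA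
  refine ⟨fun hk => (lx_windowSq_eq_r_iff hA.n_ne_zero).mp hk.1, fun hk => ?_⟩
  exact ⟨(lx_windowSq_eq_r_iff hA.n_ne_zero).mpr hk, abs_ly_windowSq_le_iff.mpr (by omega)⟩

lemma not_onSide_left_windowSq (hA : Admissible n i j l h) :
    ¬ (windowSq n i j l h).OnSide .left (pt n k) := fun ⟨hx, hy⟩ =>
  (neg_r_lt_lx_windowSq hA (abs_ly_windowSq_le_iff.mp hy).1
    (abs_ly_windowSq_le_iff.mp hy).2).ne' hx

lemma not_interiorMem_windowSq (hA : Admissible n i j l h) :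
    ¬ (windowSq n i j l h).InteriorMem (pt n k) := by
  rintro ⟨hx, hy⟩
  have ⟨_, _, _, _, _, _, _⟩ := hA
  have := abs_ly_windowSq_le_iff.mp hy.le
  have hkl : k ≠ l := fun hk => (abs_lt.mp hy).2.ne (ly_windowSq_eq_r_iff.mpr hk)
  have hkh : k ≠ h := fun hk => (abs_lt.mp hy).1.ne' (ly_windowSq_eq_neg_r_iff.mpr hk)
  have hkij : ¬ (k = i ∨ k = j) := fun hk =>
    (abs_lt.mp hx).2.ne ((lx_windowSq_eq_r_iff hA.n_ne_zero).mpr hk)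
  have := (lx_windowSq_le_r_iff hA.n_ne_zero hA.i_lt_j).mp (abs_lt.mp hx).2.le
  omega

lemma windowSq_r_pos (hA : Admissible n i j l h) : 0 < (windowSq n i j l h).r := by
  rw [windowSq_r]
  have : yOffset n i j l < yOffset n i j h :=
    yOffset_strictMonoOn (Set.mem_Ici.mpr l.cast_nonneg) (Set.mem_Ici.mpr h.cast_nonneg)
      (by exact_mod_cast (hA.l_le_i.trans_lt hA.i_lt_j).trans_le hA.j_le_h)
  exact div_pos (sub_pos.mpr this) (mul_pos two_pos slopeNorm_pos)

lemma windowSq_valid (hA : Admissible n i j l h) : (windowSq n i j l h).Valid := by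
  have hs : 0 < slope n i j :=
    mul_pos (eps_pos hA.n_ne_zero) (by have := hA.i_lt_j; exact_mod_cast (by omega : 0 < i + j))
  refine ⟨(windowSq_r_pos hA).le, ?_, ?_⟩
  · simp only [windowSq, frameSq]; linarith [arctan_lt_pi_div_two (slope n i j)]
  · simp only [windowSq, frameSq]; linarith [arctan_pos.mpr hs]

lemma isEmptySquare_windowSq (hA : Admissible n i j l h) :
    IsEmptySquare (ptSet n) (windowSq n i j l h) := by
  refine ⟨windowSq_valid hA, fun p hp => ?_⟩
  obtain ⟨k, -, rfl⟩ := mem_ptSet.mp hp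
  exact not_interiorMem_windowSq hA

lemma ncard_contactPairs_windowSq (hA : Admissible n i j l h) :
    (contactPairs (ptSet n) (windowSq n i j l h)).ncard = 4 := by
  have ⟨_, _, _, _, _, _, _⟩ := hA
  rw [ncard_contactPairs, SqSide.sum_univ]
  simp only [card_filter_ptSet, onSide_top_windowSq_iff hA, onSide_bottom_windowSq_iff hA,
    onSide_right_windowSq_iff hA, not_onSide_left_windowSq hA, Finset.filter_or,
    Finset.filter_eq', Finset.mem_Icc, Finset.filter_false]
  rw [if_pos (by omega), if_pos (by omega), if_pos (by omega), if_pos (by omega),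
    Finset.card_union_of_disjoint (by simp; omega)]
  simp

lemma contactPoints_windowSq (hA : Admissible n i j l h) :
    contactPoints (ptSet n) (windowSq n i j l h) = pt n '' {l, i, j, h} := by
  have ⟨_, _, _, _, _, _, _⟩ := hA
  ext p
  constructor
  · rintro ⟨hp, a, ha⟩
    obtain ⟨k, -, rfl⟩ := mem_ptSet.mp hp
    refine ⟨k, ?_, rfl⟩
    cases a
    · simp [(onSide_top_windowSq_iff hA).mp ha]
    · rcases (onSide_right_windowSq_iff hA).mp ha with rfl | rfl <;> simp
    · simp [(onSide_bottom_windowSq_iff hA).mp ha]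
    · exact absurd ha (not_onSide_left_windowSq hA)
  · rintro ⟨k, hk, rfl⟩
    refine ⟨mem_ptSet.mpr ⟨k, ?_, rfl⟩, ?_⟩
    · simp only [Set.mem_insert_iff, Set.mem_singleton_iff] at hk; omega
    · rcases hk with rfl | rfl | rfl | rfl
      · exact ⟨.top, (onSide_top_windowSq_iff hA).mpr rfl⟩
      · exact ⟨.right, (onSide_right_windowSq_iff hA).mpr (Or.inl rfl)⟩
      · exact ⟨.right, (onSide_right_windowSq_iff hA).mpr (Or.inr rfl)⟩
      · exact ⟨.bottom, (onSide_bottom_windowSq_iff hA).mpr rfl⟩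

theorem is4kSquare_windowSq (hA : Admissible n i j l h) :
    Is4kSquare (ptSet n) ({l, i, j, h} : Set ℕ).ncard (windowSq n i j l h) := by
  refine ⟨⟨isEmptySquare_windowSq hA, ncard_contactPairs_windowSq hA⟩, ?_⟩
  rw [contactPoints_windowSq hA, Set.ncard_image_of_injective _ (pt_injective n)]

lemma windowSq_injective {i' j' l' h' : ℕ} (hA : Admissible n i j l h)
    (hA' : Admissible n i' j' l' h') (heq : windowSq n i j l h = windowSq n i' j' l' h') :
    i = i' ∧ j = j' := by
  have key k : (k = i ∨ k = j) ↔ (k = i' ∨ k = j') := by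
    rw [← onSide_right_windowSq_iff hA, heq, onSide_right_windowSq_iff hA']
  have := key i; have := key j; have := key i'; have := key j'
  have := hA.i_lt_j; have := hA'.i_lt_j
  omega

lemma ncard_window_indices {dl dh : ℕ} (hdl : dl ≤ 1) (hdh : dh ≤ 1) (hi : 1 ≤ i) (hij : i < j) :
    ({i - dl, i, j, j + dh} : Set ℕ).ncard = 2 + dl + dh := by
  have : i - 1 ≠ i := by omega
  have : i - 1 ≠ j := by omega
  have : i - 1 ≠ j + 1 := by omega
  have : i ≠ j + 1 := by omega
  interval_cases dl <;> interval_cases dh <;> simp [Set.ncard_insert_of_notMem, hij.ne, *]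

end Construction

def pairIdx (n : ℕ) : Finset (ℕ × ℕ) :=
  Finset.Icc 2 (n / 4 + 1) ×ˢ Finset.Icc (n / 4 + 2) (2 * (n / 4) + 1)

lemma admissible_of_mem_pairIdx {q : ℕ × ℕ} (hq : q ∈ pairIdx n) {dl dh : ℕ} (hdl : dl ≤ 1)
    (hdh : dh ≤ 1) : Admissible n q.1 q.2 (q.1 - dl) (q.2 + dh) := by
  simp only [pairIdx, Finset.mem_product, Finset.mem_Icc] at hq
  constructor <;> omega

lemma le_card_pairIdx (hn : 4 ≤ n) : 1 / 64 * (n : ℝ) ^ 2 ≤ (pairIdx n).card := by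
  rw [pairIdx, Finset.card_product, Nat.card_Icc, Nat.card_Icc, show n / 4 + 1 + 1 - 2 = n / 4 by
    omega, show 2 * (n / 4) + 1 + 1 - (n / 4 + 2) = n / 4 by omega]
  have : (n : ℝ) ≤ 8 * (n / 4 : ℕ) := by exact_mod_cast (by omega : n ≤ 8 * (n / 4))
  push_cast
  nlinarith [n.cast_nonneg (α := ℝ)]

theorem exists_finset_is4kSquare (hn : 4 ≤ n) {dl dh : ℕ} (hdl : dl ≤ 1) (hdh : dh ≤ 1) :
    ∃ T : Finset Square, (∀ S ∈ T, Is4kSquare (ptSet n) (2 + dl + dh) S) ∧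
      (∀ S ∈ T, 0 < S.r) ∧ 1 / 64 * (n : ℝ) ^ 2 ≤ T.card := by
  have hA q (hq : q ∈ pairIdx n) := admissible_of_mem_pairIdx hq hdl hdh
  refine ⟨(pairIdx n).image fun q => windowSq n q.1 q.2 (q.1 - dl) (q.2 + dh), ?_, ?_, ?_⟩
  · simp only [Finset.mem_image, forall_exists_index, and_imp]
    rintro _ q hq rfl
    rw [← ncard_window_indices hdl hdh ((hA q hq).one_le_l.trans (hA q hq).l_le_i)
      (hA q hq).i_lt_j]
    exact is4kSquare_windowSq (hA q hq)
  · simp only [Finset.mem_image, forall_exists_index, and_imp]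
    rintro _ q hq rfl
    exact windowSq_r_pos (hA q hq)
  · rw [Finset.card_image_of_injOn fun q hq q' hq' heq =>
      Prod.ext_iff.mpr (windowSq_injective (hA q hq) (hA q' hq') heq)]
    exact le_card_pairIdx hn

end ParabolaPoints

end

/-- There is a constant `c > 0` such that for every `n ≥ 4` there
is a set of `n` points in general position with at least `c * n ^ 2` many
`(4,k)`-squares for each `k ∈ {2, 3, 4}`, and consequently at least `c * n ^ 2`
nontrivial 4-squares. -/
theorem exists_pointset_with_quadratically_many_4squares :
    ∃ c : ℝ, 0 < c ∧
      ∀ n : ℕ, 4 ≤ n →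
        ∃ P : Finset (ℝ × ℝ), P.card = n ∧ GenPos P ∧
          (∀ k : ℕ, k = 2 ∨ k = 3 ∨ k = 4 →
            ∃ T : Finset Square, (∀ S ∈ T, Is4kSquare P k S) ∧
              c * (n : ℝ) ^ 2 ≤ (T.card : ℝ)) ∧
          (∃ T : Finset Square, (∀ S ∈ T, IsNontrivial4Square P S) ∧
            c * (n : ℝ) ^ 2 ≤ (T.card : ℝ)) := by
  open ParabolaPoints in
  refine ⟨1 / 64, by norm_num, fun n hn => ⟨ptSet n, card_ptSet n, genPos_ptSet (by omega), ?_, ?_⟩⟩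
  · have family (dl dh : ℕ) (hdl : dl ≤ 1) (hdh : dh ≤ 1) : ∃ T : Finset Square,
        (∀ S ∈ T, Is4kSquare (ptSet n) (2 + dl + dh) S) ∧ 1 / 64 * (n : ℝ) ^ 2 ≤ T.card :=
      let ⟨T, hT, _, hcard⟩ := exists_finset_is4kSquare hn hdl hdh
      ⟨T, hT, hcard⟩
    rintro k (rfl | rfl | rfl)
    · exact family 0 0 zero_le_one zero_le_one
    · exact family 0 1 zero_le_one le_rfl
    · exact family 1 1 le_rfl le_rfl
  · obtain ⟨T, hT, hr, hcard⟩ :=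
      exists_finset_is4kSquare hn (dl := 0) (dh := 0) zero_le_one zero_le_one
    exact ⟨T, fun S hS => ⟨(hT S hS).1, hr S hS⟩, hcard⟩
end

section
/- There exists a constant c > 0 such that every finite set P of n ≥ 2 points in the plane in general position admits at least c·n distinct (4,2)-squares (empty squares with exactly four contact pairs and exactly two contact points, the two contact points lying at opposite corners). -/
open Real Set

/-- The two contact points of `S` lie at opposite corners of `S`. -/
def OppositeCornerContacts (P : Finset (ℝ × ℝ)) (S : Square) : Prop :=
  ∃ p q : ℝ × ℝ, p ≠ q ∧ contactPoints P S = {p, q} ∧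
    ((S.OnSide SqSide.bottom p ∧ S.OnSide SqSide.left p ∧
      S.OnSide SqSide.top q ∧ S.OnSide SqSide.right q) ∨
     (S.OnSide SqSide.bottom p ∧ S.OnSide SqSide.right p ∧
      S.OnSide SqSide.top q ∧ S.OnSide SqSide.left q))

namespace SqAux

/-- Squared Euclidean distance. -/
def sd (p q : ℝ × ℝ) : ℝ := (p.1 - q.1)^2 + (p.2 - q.2)^2

lemma sd_comm (p q : ℝ × ℝ) : sd p q = sd q p := by unfold sd; ring

lemma sd_nonneg (p q : ℝ × ℝ) : 0 ≤ sd p q := by unfold sd; positivity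

lemma sd_eq_zero {p q : ℝ × ℝ} (h : sd p q ≤ 0) : p = q := by
  unfold sd at h
  have h1 : p.1 - q.1 = 0 := by nlinarith [sq_nonneg (p.1 - q.1), sq_nonneg (p.2 - q.2)]
  have h2 : p.2 - q.2 = 0 := by nlinarith [sq_nonneg (p.1 - q.1), sq_nonneg (p.2 - q.2)]
  exact Prod.ext_iff.mpr ⟨by linarith, by linarith⟩

lemma sd_pos {p q : ℝ × ℝ} (h : p ≠ q) : 0 < sd p q := by
  rcases lt_or_eq_of_le (sd_nonneg p q) with h' | h'
  · exact h'
  · exact absurd (sd_eq_zero h'.ge) h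

lemma cos_sq_quarter (k : ℤ) : Real.cos (Real.pi/4 + k * (Real.pi/2)) ^ 2 = 1/2 := by
  have h : Real.cos (2 * (Real.pi/4 + (k : ℝ) * (Real.pi/2))) = 0 := by
    have e : 2 * (Real.pi/4 + (k:ℝ) * (Real.pi/2)) = Real.pi/2 + (k:ℝ) * Real.pi := by ring
    rw [e, Real.cos_add, Real.cos_pi_div_two, Real.sin_pi_div_two, Real.sin_int_mul_pi]
    ring
  rw [Real.cos_sq, h]; ring

lemma sin_sq_quarter (k : ℤ) : Real.sin (Real.pi/4 + k * (Real.pi/2)) ^ 2 = 1/2 := by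
  have := Real.sin_sq_add_cos_sq (Real.pi/4 + (k:ℝ) * (Real.pi/2))
  have := cos_sq_quarter k
  linarith

/-- The orientation of the square with diagonal `pq`, normalized to `[0, π/2)`. -/
noncomputable def diagθ (p q : ℝ × ℝ) : ℝ :=
  (Complex.arg ⟨q.1 - p.1, q.2 - p.2⟩ - Real.pi/4) -
    ⌊(Complex.arg ⟨q.1 - p.1, q.2 - p.2⟩ - Real.pi/4) / (Real.pi/2)⌋ * (Real.pi/2)

/-- The unique square having `p` and `q` as opposite corners. -/
noncomputable def diagSquare (p q : ℝ × ℝ) : Square where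
  center := ((p.1+q.1)/2, (p.2+q.2)/2)
  r := Real.sqrt (sd p q) * Real.sqrt 2 / 4
  θ := diagθ p q

set_option maxHeartbeats 1000000 in
lemma diag_facts {p q : ℝ × ℝ} (hpq : p ≠ q) :
    (diagSquare p q).Valid ∧ 0 < (diagSquare p q).r ∧
    (∃ ε δ : ℝ, (ε = 1 ∨ ε = -1) ∧ (δ = 1 ∨ δ = -1) ∧
      (diagSquare p q).lx p = -(ε * (diagSquare p q).r) ∧
      (diagSquare p q).ly p = -(δ * (diagSquare p q).r) ∧
      (diagSquare p q).lx q = ε * (diagSquare p q).r ∧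
      (diagSquare p q).ly q = δ * (diagSquare p q).r) ∧
    (∀ x, (diagSquare p q).Mem x → sd x p + sd x q ≤ sd p q) ∧
    (∀ x, (diagSquare p q).InteriorMem x → sd x p + sd x q < sd p q) := by
  have hpi2 : (0:ℝ) < Real.pi / 2 := by positivity
  set S := diagSquare p q with hS
  have hD : 0 < sd p q := sd_pos hpq
  set d : ℝ := Real.sqrt (sd p q) with hd_def
  have hd : 0 < d := Real.sqrt_pos.mpr hD
  have hd2 : d^2 = sd p q := Real.sq_sqrt hD.le
  set w : ℂ := ⟨q.1 - p.1, q.2 - p.2⟩ with hw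
  have hwne : w ≠ 0 := by
    intro h
    rw [Complex.ext_iff] at h
    simp only [Complex.zero_re, Complex.zero_im] at h
    have : sd p q = 0 := by unfold sd; nlinarith [h.1, h.2]
    linarith
  have habs : ‖w‖ = d := by
    rw [Complex.norm_def, hw, Complex.normSq_mk, hd_def]
    congr 1
    unfold sd; ring
  set β : ℝ := Complex.arg w with hβ
  have hcosβ : Real.cos β = (q.1 - p.1) / d := by
    rw [hβ, Complex.cos_arg hwne, habs]
  have hsinβ : Real.sin β = (q.2 - p.2) / d := by
    rw [hβ, Complex.sin_arg, habs]
  have ha : q.1 - p.1 = d * Real.cos β := by rw [hcosβ]; field_simp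
  have hb : q.2 - p.2 = d * Real.sin β := by rw [hsinβ]; field_simp
  have hθdef : S.θ = (β - Real.pi/4) - ⌊(β - Real.pi/4) / (Real.pi/2)⌋ * (Real.pi/2) := rfl
  have hr : S.r = d * Real.sqrt 2 / 4 := rfl
  have h2 : (Real.sqrt 2 : ℝ)^2 = 2 := Real.sq_sqrt (by norm_num)
  have hs2pos : (0:ℝ) < Real.sqrt 2 := by positivity
  have hrpos : 0 < S.r := by rw [hr]; positivity
  have hvalid : S.Valid := by
    refine ⟨hrpos.le, ?_, ?_⟩
    · rw [hθdef]; exact Int.sub_floor_div_mul_nonneg _ hpi2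
    · rw [hθdef]; exact Int.sub_floor_div_mul_lt _ hpi2
  set k : ℤ := ⌊(β - Real.pi/4) / (Real.pi/2)⌋ with hk
  have hbt : β - S.θ = Real.pi/4 + (k:ℝ) * (Real.pi/2) := by rw [hθdef]; ring
  set c : ℝ := Real.cos (β - S.θ) with hc_def
  set s : ℝ := Real.sin (β - S.θ) with hs_def
  have hc2 : c^2 = 1/2 := by rw [hc_def, hbt]; exact cos_sq_quarter k
  have hs2 : s^2 = 1/2 := by rw [hs_def, hbt]; exact sin_sq_quarter k
  have hcc : c = Real.cos β * Real.cos S.θ + Real.sin β * Real.sin S.θ := by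
    rw [hc_def, Real.cos_sub]
  have hss : s = Real.sin β * Real.cos S.θ - Real.cos β * Real.sin S.θ := by
    rw [hs_def, Real.sin_sub]
  have hcenter1 : S.center.1 = (p.1+q.1)/2 := rfl
  have hcenter2 : S.center.2 = (p.2+q.2)/2 := rfl
  -- local coordinates of p and q
  have hlxp : S.lx p = -((d/2) * c) := by
    rw [Square.lx, hcenter1, hcenter2, hcc]
    have e1 : p.1 - (p.1+q.1)/2 = -((q.1 - p.1)/2) := by ring
    have e2 : p.2 - (p.2+q.2)/2 = -((q.2 - p.2)/2) := by ring
    rw [e1, e2, ha, hb]; ring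
  have hlyp : S.ly p = -((d/2) * s) := by
    rw [Square.ly, hcenter1, hcenter2, hss]
    have e1 : p.1 - (p.1+q.1)/2 = -((q.1 - p.1)/2) := by ring
    have e2 : p.2 - (p.2+q.2)/2 = -((q.2 - p.2)/2) := by ring
    rw [e1, e2, ha, hb]; ring
  have hlxq : S.lx q = (d/2) * c := by
    rw [Square.lx, hcenter1, hcenter2, hcc]
    have e1 : q.1 - (p.1+q.1)/2 = (q.1 - p.1)/2 := by ring
    have e2 : q.2 - (p.2+q.2)/2 = (q.2 - p.2)/2 := by ring
    rw [e1, e2, ha, hb]; ring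
  have hlyq : S.ly q = (d/2) * s := by
    rw [Square.ly, hcenter1, hcenter2, hss]
    have e1 : q.1 - (p.1+q.1)/2 = (q.1 - p.1)/2 := by ring
    have e2 : q.2 - (p.2+q.2)/2 = (q.2 - p.2)/2 := by ring
    rw [e1, e2, ha, hb]; ring
  -- signs
  set ε : ℝ := c * Real.sqrt 2 with hε_def
  set δ : ℝ := s * Real.sqrt 2 with hδ_def
  have hε2 : ε * ε = 1 := by rw [hε_def]; linear_combination c^2 * h2 + 2 * hc2
  have hδ2 : δ * δ = 1 := by rw [hδ_def]; linear_combination s^2 * h2 + 2 * hs2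
  have hε1 : ε = 1 ∨ ε = -1 := mul_self_eq_one_iff.mp hε2
  have hδ1 : δ = 1 ∨ δ = -1 := mul_self_eq_one_iff.mp hδ2
  have hcε : (d/2) * c = ε * S.r := by
    rw [hr, hε_def]
    linear_combination (-(c*d/4)) * h2
  have hsδ : (d/2) * s = δ * S.r := by
    rw [hr, hδ_def]
    linear_combination (-(s*d/4)) * h2
  -- membership bounds
  have hpyth : Real.sin S.θ ^ 2 + Real.cos S.θ ^ 2 = 1 := Real.sin_sq_add_cos_sq S.θ
  have hsum : ∀ x : ℝ × ℝ, (S.lx x)^2 + (S.ly x)^2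
      = (x.1 - (p.1+q.1)/2)^2 + (x.2 - (p.2+q.2)/2)^2 := by
    intro x
    rw [Square.lx, Square.ly, hcenter1, hcenter2]
    linear_combination ((x.1 - (p.1+q.1)/2)^2 + (x.2 - (p.2+q.2)/2)^2) * hpyth
  have hr2 : S.r^2 = sd p q / 8 := by
    rw [hr]
    have : (d * Real.sqrt 2 / 4)^2 = d^2 * (Real.sqrt 2)^2 / 16 := by ring
    rw [this, hd2, h2]; ring
  have hiden : ∀ x : ℝ × ℝ, sd x p + sd x q
      = 2 * ((x.1 - (p.1+q.1)/2)^2 + (x.2 - (p.2+q.2)/2)^2) + sd p q / 2 := by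
    intro x; unfold sd; ring
  have hmem : ∀ x, S.Mem x → sd x p + sd x q ≤ sd p q := by
    rintro x ⟨h1, h2'⟩
    obtain ⟨l1, l2⟩ := abs_le.mp h1
    obtain ⟨m1, m2⟩ := abs_le.mp h2'
    have b1 : (S.lx x)^2 ≤ S.r^2 := sq_le_sq' l1 l2
    have b2 : (S.ly x)^2 ≤ S.r^2 := sq_le_sq' m1 m2
    have hx := hsum x
    rw [hiden x]
    linarith [b1, b2, hr2, hx]
  have hintm : ∀ x, S.InteriorMem x → sd x p + sd x q < sd p q := by
    rintro x ⟨h1, h2'⟩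
    obtain ⟨l1, l2⟩ := abs_lt.mp h1
    obtain ⟨m1, m2⟩ := abs_lt.mp h2'
    have b1 : (S.lx x)^2 < S.r^2 := sq_lt_sq' l1 l2
    have b2 : (S.ly x)^2 < S.r^2 := sq_lt_sq' m1 m2
    have hx := hsum x
    rw [hiden x]
    linarith [b1, b2, hr2, hx]
  exact ⟨hvalid, hrpos, ⟨ε, δ, hε1, hδ1,
    by rw [hlxp, hcε], by rw [hlyp, hsδ], by rw [hlxq, hcε], by rw [hlyq, hsδ]⟩,
    hmem, hintm⟩

lemma onSide_mem {S : Square} (h0 : 0 ≤ S.r) {a : SqSide} {x : ℝ × ℝ}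
    (h : S.OnSide a x) : S.Mem x := by
  cases a with
  | top => exact ⟨h.2, by rw [h.1, abs_of_nonneg h0]⟩
  | bottom => exact ⟨h.2, by rw [h.1, abs_neg, abs_of_nonneg h0]⟩
  | right => exact ⟨by rw [h.1, abs_of_nonneg h0], h.2⟩
  | left => exact ⟨by rw [h.1, abs_neg, abs_of_nonneg h0], h.2⟩

lemma main_count (P : Finset (ℝ × ℝ)) (S : Square) (p q : ℝ × ℝ)
    (hp : p ∈ P) (hq : q ∈ P) (hpq : p ≠ q)
    (hv : S.Valid)
    (sp sq : SqSide)
    (hspsq : (sp = SqSide.left ∧ sq = SqSide.right) ∨ (sp = SqSide.right ∧ sq = SqSide.left))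
    (pbot : S.OnSide SqSide.bottom p) (psp : S.OnSide sp p)
    (qtop : S.OnSide SqSide.top q) (qsq : S.OnSide sq q)
    (pnottop : ¬ S.OnSide SqSide.top p) (pnotsq : ¬ S.OnSide sq p)
    (qnotbot : ¬ S.OnSide SqSide.bottom q) (qnotsp : ¬ S.OnSide sp q)
    (hint : ∀ x ∈ P, ¬ S.InteriorMem x)
    (hbd : ∀ x ∈ P, S.Mem x → x = p ∨ x = q) :
    (Is4kSquare P 2 S ∧ OppositeCornerContacts P S) ∧ contactPoints P S = {p, q} := by
  have hpoints : contactPoints P S = {p, q} := by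
    ext x
    simp only [contactPoints, Set.mem_setOf_eq, Set.mem_insert_iff, Set.mem_singleton_iff]
    constructor
    · rintro ⟨hxP, a, hside⟩
      exact hbd x hxP (onSide_mem hv.1 hside)
    · rintro (rfl | rfl)
      exacts [⟨hp, SqSide.bottom, pbot⟩, ⟨hq, SqSide.top, qtop⟩]
  have hpairs : contactPairs P S
      = {(p, SqSide.bottom), (p, sp), (q, SqSide.top), (q, sq)} := by
    ext ⟨x, a⟩
    simp only [contactPairs, Set.mem_setOf_eq, Set.mem_insert_iff, Set.mem_singleton_iff,
      Prod.mk.injEq]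
    constructor
    · rintro ⟨hxP, hside⟩
      rcases hbd x hxP (onSide_mem hv.1 hside) with rfl | rfl
      · rcases hspsq with ⟨rfl, rfl⟩ | ⟨rfl, rfl⟩ <;> cases a
        · exact absurd hside pnottop
        · exact absurd hside pnotsq
        · exact Or.inl ⟨rfl, rfl⟩
        · exact Or.inr (Or.inl ⟨rfl, rfl⟩)
        · exact absurd hside pnottop
        · exact Or.inr (Or.inl ⟨rfl, rfl⟩)
        · exact Or.inl ⟨rfl, rfl⟩
        · exact absurd hside pnotsq
      · rcases hspsq with ⟨rfl, rfl⟩ | ⟨rfl, rfl⟩ <;> cases a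
        · exact Or.inr (Or.inr (Or.inl ⟨rfl, rfl⟩))
        · exact Or.inr (Or.inr (Or.inr ⟨rfl, rfl⟩))
        · exact absurd hside qnotbot
        · exact absurd hside qnotsp
        · exact Or.inr (Or.inr (Or.inl ⟨rfl, rfl⟩))
        · exact absurd hside qnotsp
        · exact absurd hside qnotbot
        · exact Or.inr (Or.inr (Or.inr ⟨rfl, rfl⟩))
    · rintro (⟨rfl, rfl⟩ | ⟨rfl, rfl⟩ | ⟨rfl, rfl⟩ | ⟨rfl, rfl⟩)
      exacts [⟨hp, pbot⟩, ⟨hp, psp⟩, ⟨hq, qtop⟩, ⟨hq, qsq⟩]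
  have h4 : (contactPairs P S).ncard = 4 := by
    rw [hpairs]
    rcases hspsq with ⟨rfl, rfl⟩ | ⟨rfl, rfl⟩ <;>
      rw [Set.ncard_insert_of_notMem (by simp [hpq]),
        Set.ncard_insert_of_notMem (by simp [hpq]),
        Set.ncard_insert_of_notMem (by simp [hpq]),
        Set.ncard_singleton]
  have h2card : (contactPoints P S).ncard = 2 := by
    rw [hpoints]; exact Set.ncard_pair hpq
  have hopp : OppositeCornerContacts P S := by
    refine ⟨p, q, hpq, hpoints, ?_⟩
    rcases hspsq with ⟨rfl, rfl⟩ | ⟨rfl, rfl⟩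
    · exact Or.inl ⟨pbot, psp, qtop, qsq⟩
    · exact Or.inr ⟨pbot, psp, qtop, qsq⟩
  exact ⟨⟨⟨⟨⟨hv, hint⟩, h4⟩, h2card⟩, hopp⟩, hpoints⟩

lemma key (P : Finset (ℝ × ℝ)) (S : Square) (p q : ℝ × ℝ)
    (hp : p ∈ P) (hq : q ∈ P) (hpq : p ≠ q)
    (hv : S.Valid) (hr : 0 < S.r)
    (ε : ℝ) (hε : ε = 1 ∨ ε = -1)
    (hlxp : S.lx p = -(ε * S.r)) (hlyp : S.ly p = -S.r)
    (hlxq : S.lx q = ε * S.r) (hlyq : S.ly q = S.r)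
    (hint : ∀ x ∈ P, ¬ S.InteriorMem x)
    (hbd : ∀ x ∈ P, S.Mem x → x = p ∨ x = q) :
    (Is4kSquare P 2 S ∧ OppositeCornerContacts P S) ∧ contactPoints P S = {p, q} := by
  have hr0 := hr.le
  have habs_e : |ε * S.r| = S.r := by
    rcases hε with rfl | rfl <;> simp [abs_of_nonneg hr0]
  have hlyp_abs : |S.ly p| ≤ S.r := by rw [hlyp, abs_neg, abs_of_nonneg hr0]
  have hlyq_abs : |S.ly q| ≤ S.r := by rw [hlyq, abs_of_nonneg hr0]
  have pbot : S.OnSide SqSide.bottom p := ⟨hlyp, by rw [hlxp, abs_neg, habs_e]⟩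
  have qtop : S.OnSide SqSide.top q := ⟨hlyq, by rw [hlxq, habs_e]⟩
  have pnottop : ¬ S.OnSide SqSide.top p := by
    intro h; have := h.1; rw [hlyp] at this; linarith
  have qnotbot : ¬ S.OnSide SqSide.bottom q := by
    intro h; have := h.1; rw [hlyq] at this; linarith
  rcases hε with rfl | rfl
  · have psp : S.OnSide SqSide.left p := ⟨by rw [hlxp, one_mul], hlyp_abs⟩
    have qsq : S.OnSide SqSide.right q := ⟨by rw [hlxq, one_mul], hlyq_abs⟩
    have pnotsq : ¬ S.OnSide SqSide.right p := by
      intro h; have := h.1; rw [hlxp] at this; nlinarith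
    have qnotsp : ¬ S.OnSide SqSide.left q := by
      intro h; have := h.1; rw [hlxq] at this; nlinarith
    exact main_count P S p q hp hq hpq hv SqSide.left SqSide.right
      (Or.inl ⟨rfl, rfl⟩) pbot psp qtop qsq pnottop pnotsq qnotbot qnotsp hint hbd
  · have psp : S.OnSide SqSide.right p := ⟨by rw [hlxp]; ring, hlyp_abs⟩
    have qsq : S.OnSide SqSide.left q := ⟨by rw [hlxq]; ring, hlyq_abs⟩
    have pnotsq : ¬ S.OnSide SqSide.left p := by
      intro h; have := h.1; rw [hlxp] at this; nlinarith
    have qnotsp : ¬ S.OnSide SqSide.right q := by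
      intro h; have := h.1; rw [hlxq] at this; nlinarith
    exact main_count P S p q hp hq hpq hv SqSide.right SqSide.left
      (Or.inr ⟨rfl, rfl⟩) pbot psp qtop qsq pnottop pnotsq qnotbot qnotsp hint hbd

end SqAux

set_option maxHeartbeats 1000000 in
/-- There is a constant `c > 0` such that every finite set `P` of
`n ≥ 2` points in general position admits at least `c * n` distinct
`(4,2)`-squares, with the two contact points at opposite corners. -/
theorem linear_le_num42Squares :
    ∃ c : ℝ, 0 < c ∧
      ∀ P : Finset (ℝ × ℝ), 2 ≤ P.card → GenPos P →
        ∃ T : Finset Square,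
          (∀ S ∈ T, Is4kSquare P 2 S ∧ OppositeCornerContacts P S) ∧
          c * (P.card : ℝ) ≤ (T.card : ℝ) := by
  classical
  refine ⟨1/2, by norm_num, ?_⟩
  intro P hcard _hgen
  -- nearest-neighbor function
  have hex : ∀ p ∈ P, ∃ q ∈ P.erase p, ∀ x ∈ P.erase p, SqAux.sd p q ≤ SqAux.sd p x := by
    intro p hp
    exact Finset.exists_min_image (P.erase p) (fun q => SqAux.sd p q)
      (Finset.card_pos.mp (by rw [Finset.card_erase_of_mem hp]; omega))
  choose! nn hnn hmin using hex
  set f : (ℝ × ℝ) → Square := fun p => SqAux.diagSquare p (nn p) with hf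
  have main : ∀ p ∈ P,
      (Is4kSquare P 2 (f p) ∧ OppositeCornerContacts P (f p)) ∧
        contactPoints P (f p) = {p, nn p} := by
    intro p hp
    have hq' := hnn p hp
    have hqP : nn p ∈ P := Finset.mem_of_mem_erase hq'
    have hpq : p ≠ nn p := (Finset.ne_of_mem_erase hq').symm
    obtain ⟨hv, hr, ⟨ε, δ, hε, hδ, hlxp, hlyp, hlxq, hlyq⟩, hmem, hintm⟩ :=
      SqAux.diag_facts hpq
    have habs_e : |ε * (f p).r| = (f p).r := by
      rcases hε with rfl | rfl <;> simp [abs_of_nonneg hr.le] <;> exact hr.le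
    have hint : ∀ x ∈ P, ¬ (f p).InteriorMem x := by
      intro x hx hix
      have h1 := hintm x hix
      have hxp : x ≠ p := by
        rintro rfl
        have := hix.1
        rw [hlxp, abs_neg, habs_e] at this
        exact lt_irrefl _ this
      have hxe : x ∈ P.erase p := Finset.mem_erase.mpr ⟨hxp, hx⟩
      have h2 := hmin p hp x hxe
      rw [SqAux.sd_comm p x] at h2
      linarith [SqAux.sd_nonneg x (nn p)]
    have hbd : ∀ x ∈ P, (f p).Mem x → x = p ∨ x = nn p := by
      intro x hx hxm
      by_cases hxp : x = p
      · exact Or.inl hxp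
      · right
        have hxe : x ∈ P.erase p := Finset.mem_erase.mpr ⟨hxp, hx⟩
        have h2 := hmin p hp x hxe
        rw [SqAux.sd_comm p x] at h2
        have h3 := hmem x hxm
        exact SqAux.sd_eq_zero (by linarith)
    rcases hδ with rfl | rfl
    · have := SqAux.key P (f p) p (nn p) hp hqP hpq hv hr ε hε
        (by rw [hlxp]) (by rw [hlyp]; ring) (by rw [hlxq]) (by rw [hlyq]; ring)
        hint hbd
      exact ⟨this.1, this.2⟩
    · have hbd' : ∀ x ∈ P, (f p).Mem x → x = nn p ∨ x = p := by
        intro x hx hxm; exact (hbd x hx hxm).symm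
      have hε' : -ε = 1 ∨ -ε = -1 := by rcases hε with rfl | rfl <;> simp
      have := SqAux.key P (f p) (nn p) p hqP hp hpq.symm hv hr (-ε) hε'
        (by rw [hlxq]; ring) (by rw [hlyq]; ring) (by rw [hlxp]; ring)
        (by rw [hlyp]; ring) hint hbd'
      exact ⟨this.1, by rw [this.2]; exact Set.pair_comm (nn p) p⟩
  refine ⟨P.image f, ?_, ?_⟩
  · intro S hS
    obtain ⟨a, ha, rfl⟩ := Finset.mem_image.mp hS
    exact (main a ha).1
  · have hcount : P.card ≤ 2 * (P.image f).card := by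
      apply Finset.card_le_mul_card_image
      intro b hb
      obtain ⟨a, ha, rfl⟩ := Finset.mem_image.mp hb
      have hsub : P.filter (fun x => f x = f a) ⊆ {a, nn a} := by
        intro x hx
        obtain ⟨hxP, hfx⟩ := Finset.mem_filter.mp hx
        have h1 := (main x hxP).2
        have h2 := (main a ha).2
        rw [hfx, h2] at h1
        have : x ∈ ({a, nn a} : Set (ℝ × ℝ)) := by
          rw [h1]; exact Set.mem_insert x _
        rcases this with rfl | h
        · exact Finset.mem_insert_self _ _
        · simp only [Set.mem_singleton_iff] at h
          subst h
          exact Finset.mem_insert_of_mem (Finset.mem_singleton_self _)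
      calc (P.filter (fun x => f x = f a)).card ≤ ({a, nn a} : Finset (ℝ × ℝ)).card :=
            Finset.card_le_card hsub
        _ ≤ 2 := Finset.card_insert_le a {nn a} |>.trans (by simp)
    have h2 : (P.card : ℝ) ≤ 2 * ((P.image f).card : ℝ) := by exact_mod_cast hcount
    linarith
end

section
/- There exists a constant c > 0 such that every finite set P of n ≥ 3 points in the plane in general position admits at least c·n distinct (4,3)-squares (empty squares with exactly four contact pairs and exactly three contact points). -/
open Real Set

namespace Sq43

instance : Fintype SqSide :=
  ⟨⟨[SqSide.top, SqSide.right, SqSide.bottom, SqSide.left], by decide⟩, fun x => by cases x <;> decide⟩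

/-- squared distance -/
def sqd (a b : ℝ × ℝ) : ℝ := (b.1 - a.1)^2 + (b.2 - a.2)^2

lemma sqd_nonneg (a b : ℝ × ℝ) : 0 ≤ sqd a b := by
  unfold sqd; positivity

lemma sqd_comm (a b : ℝ × ℝ) : sqd a b = sqd b a := by unfold sqd; ring

lemma contactPairs_finite (P : Finset (ℝ × ℝ)) (S : Square) : (contactPairs P S).Finite := by
  apply Set.Finite.subset (Set.Finite.prod P.finite_toSet (Set.finite_univ (α := SqSide)))
  rintro ⟨z, a⟩ hz
  exact ⟨hz.1, Set.mem_univ _⟩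

lemma contactPoints_finite (P : Finset (ℝ × ℝ)) (S : Square) : (contactPoints P S).Finite := by
  apply Set.Finite.subset P.finite_toSet
  intro z hz; exact hz.1

lemma le_ncard_of_finset {α : Type*} (F : Finset α) {t : Set α} (h : ↑F ⊆ t) (ht : t.Finite) :
    F.card ≤ t.ncard := by
  have := Set.ncard_le_ncard h ht
  rwa [Set.ncard_coe_finset] at this

/-- one-step rotation of the frame by π/2 -/
lemma lx_step (c : ℝ × ℝ) (r θ : ℝ) (z : ℝ × ℝ) :
    (Square.mk c r (θ + Real.pi/2)).lx z = (Square.mk c r θ).ly z := by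
  simp only [Square.lx, Square.ly, Real.cos_add_pi_div_two, Real.sin_add_pi_div_two]
  ring

lemma ly_step (c : ℝ × ℝ) (r θ : ℝ) (z : ℝ × ℝ) :
    (Square.mk c r (θ + Real.pi/2)).ly z = -((Square.mk c r θ).lx z) := by
  simp only [Square.lx, Square.ly, Real.cos_add_pi_div_two, Real.sin_add_pi_div_two]
  ring

def sigStep : SqSide ≃ SqSide where
  toFun a := match a with
    | SqSide.top => SqSide.left
    | SqSide.right => SqSide.top
    | SqSide.bottom => SqSide.right
    | SqSide.left => SqSide.bottom
  invFun a := match a with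
    | SqSide.left => SqSide.top
    | SqSide.top => SqSide.right
    | SqSide.right => SqSide.bottom
    | SqSide.bottom => SqSide.left
  left_inv a := by cases a <;> rfl
  right_inv a := by cases a <;> rfl

lemma onSide_step (c : ℝ × ℝ) (r θ : ℝ) (a : SqSide) (z : ℝ × ℝ) :
    (Square.mk c r (θ + Real.pi/2)).OnSide a z ↔ (Square.mk c r θ).OnSide (sigStep a) z := by
  cases a <;>
    simp only [Square.OnSide, sigStep, Equiv.coe_fn_mk, lx_step, ly_step, abs_neg, neg_eq_iff_eq_neg,
      neg_neg, neg_inj] <;>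
    constructor <;> rintro ⟨h1, h2⟩ <;> constructor <;> first | linarith | (rwa [abs_neg] at *) | assumption

lemma interior_step (c : ℝ × ℝ) (r θ : ℝ) (z : ℝ × ℝ) :
    (Square.mk c r (θ + Real.pi/2)).InteriorMem z ↔ (Square.mk c r θ).InteriorMem z := by
  simp only [Square.InteriorMem, lx_step, ly_step, abs_neg]
  tauto

/-- shifting the frame angle by any integer multiple of π/2 permutes the sides -/
lemma key_shift (c : ℝ × ℝ) (r : ℝ) (k : ℤ) (θ : ℝ) :
    ∃ σ : SqSide ≃ SqSide,
      (∀ a z, (Square.mk c r (θ + (k:ℝ) * (Real.pi/2))).OnSide a z ↔ (Square.mk c r θ).OnSide (σ a) z) ∧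
      (∀ z, (Square.mk c r (θ + (k:ℝ) * (Real.pi/2))).InteriorMem z ↔ (Square.mk c r θ).InteriorMem z) := by
  induction k using Int.induction_on generalizing θ with
  | zero => exact ⟨Equiv.refl _, by intro a z; norm_num, by intro z; norm_num⟩
  | succ k ih =>
      obtain ⟨σ, hσ, hi⟩ := ih (θ + Real.pi/2)
      have e : θ + ((k:ℤ)+1 : ℤ) * (Real.pi/2) = (θ + Real.pi/2) + ((k:ℤ) : ℝ) * (Real.pi/2) := by
        push_cast; ring
      refine ⟨σ.trans sigStep, ?_, ?_⟩
      · intro a z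
        rw [e, hσ a z]
        have h2 := onSide_step c r θ (σ a)
        exact h2 z
      · intro z
        rw [e, hi z]
        exact interior_step c r θ z
  | pred k ih =>
      obtain ⟨σ, hσ, hi⟩ := ih (θ - Real.pi/2)
      have e : θ + ((-(k:ℤ)-1 : ℤ) : ℝ) * (Real.pi/2) = (θ - Real.pi/2) + ((-(k:ℤ) : ℤ) : ℝ) * (Real.pi/2) := by
        push_cast; ring
      have estep : θ - Real.pi/2 + Real.pi/2 = θ := by ring
      refine ⟨σ.trans sigStep.symm, ?_, ?_⟩
      · intro a z
        rw [e, hσ a z]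
        have h2 := onSide_step c r (θ - Real.pi/2) (sigStep.symm (σ a)) z
        rw [estep] at h2
        simp only [Equiv.apply_symm_apply] at h2
        exact h2.symm
      · intro z
        rw [e, hi z]
        have h2 := interior_step c r (θ - Real.pi/2) z
        rw [estep] at h2
        exact h2.symm

/-- Normalize a square to a valid parametrization, preserving geometry. -/
lemma norm_spec (S : Square) (hr : 0 ≤ S.r) :
    ∃ S' : Square, S'.Valid ∧ S'.r = S.r ∧
      (∀ z, S'.InteriorMem z ↔ S.InteriorMem z) ∧
      ∃ σ : SqSide ≃ SqSide, ∀ a z, S.OnSide a z ↔ S'.OnSide (σ a) z := by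
  have hpi : (0:ℝ) < Real.pi/2 := by positivity
  set k : ℤ := ⌊S.θ / (Real.pi/2)⌋ with hk
  set θ' : ℝ := S.θ - (k:ℝ) * (Real.pi/2) with hθ'
  obtain ⟨σ, hσ, hi⟩ := key_shift S.center S.r k θ'
  have hSeq : Square.mk S.center S.r (θ' + (k:ℝ) * (Real.pi/2)) = S := by
    have : θ' + (k:ℝ) * (Real.pi/2) = S.θ := by rw [hθ']; ring
    rw [this]
  refine ⟨Square.mk S.center S.r θ', ⟨hr, ?_, ?_⟩, rfl, ?_, σ, ?_⟩
  · exact Int.sub_floor_div_mul_nonneg S.θ hpi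
  · exact Int.sub_floor_div_mul_lt S.θ hpi
  · intro z
    have := hi z
    rw [hSeq] at this
    exact this.symm
  · intro a z
    have := hσ a z
    rw [hSeq] at this
    exact this

/-- `GenPos` bounds contact pairs for squares with arbitrary (not normalized) angle. -/
lemma genPosAny {P : Finset (ℝ × ℝ)} (hgp : GenPos P) (S : Square) (hr : 0 ≤ S.r) :
    (contactPairs P S).ncard ≤ 4 := by
  obtain ⟨S', hval, -, -, σ, hσ⟩ := norm_spec S hr
  have himg : contactPairs P S' = (fun pa => (pa.1, σ pa.2)) '' contactPairs P S := by
    ext ⟨z, b⟩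
    constructor
    · rintro ⟨hz, hside⟩
      refine ⟨(z, σ.symm b), ⟨hz, ?_⟩, by simp⟩
      rw [hσ (σ.symm b) z]
      simpa using hside
    · rintro ⟨⟨w, a⟩, ⟨hw, hside⟩, heq⟩
      obtain ⟨h1, h2⟩ := Prod.mk.injEq .. ▸ heq
      cases h1; cases h2
      exact ⟨hw, (hσ a w).mp hside⟩
  have hinj : Function.Injective (fun pa : (ℝ × ℝ) × SqSide => (pa.1, σ pa.2)) := by
    rintro ⟨z, a⟩ ⟨w, b⟩ h
    simp only [Prod.mk.injEq] at h
    exact Prod.ext h.1 (σ.injective h.2)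
  have := hgp S' hval
  rwa [himg, Set.ncard_image_of_injective _ hinj] at this

end Sq43

namespace Sq43

lemma ncard_pair_lower {P : Finset (ℝ × ℝ)} {S : Square}
    {p q u : ℝ × ℝ} {a₁ a₂ a₃ a₄ : SqSide}
    (hpq : p ≠ q) (hpu : p ≠ u) (hqu : q ≠ u) (h12 : a₁ ≠ a₂)
    (hp : (p, a₁) ∈ contactPairs P S) (hp2 : (p, a₂) ∈ contactPairs P S)
    (hq : (q, a₃) ∈ contactPairs P S) (hu : (u, a₄) ∈ contactPairs P S) :
    4 ≤ (contactPairs P S).ncard := by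
  classical
  have hsub : ↑({(p, a₁), (p, a₂), (q, a₃), (u, a₄)} : Finset ((ℝ × ℝ) × SqSide)) ⊆ contactPairs P S := by
    intro x hx
    simp only [Finset.coe_insert, Finset.coe_singleton, Set.mem_insert_iff, Set.mem_singleton_iff] at hx
    rcases hx with h | h | h | h <;> (subst h; assumption)
  have hcard : ({(p, a₁), (p, a₂), (q, a₃), (u, a₄)} : Finset ((ℝ × ℝ) × SqSide)).card = 4 := by
    rw [Finset.card_insert_of_notMem, Finset.card_insert_of_notMem, Finset.card_insert_of_notMem,
      Finset.card_singleton] <;>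
      simp [Prod.mk.injEq, hpq, hpu, hqu, h12]
  calc (4:ℕ) = _ := hcard.symm
    _ ≤ _ := le_ncard_of_finset _ hsub (contactPairs_finite P S)

lemma ncard_five {P : Finset (ℝ × ℝ)} {S : Square}
    {p q u w : ℝ × ℝ} {a₁ a₂ a₃ a₄ a₅ : SqSide}
    (hpq : p ≠ q) (hpu : p ≠ u) (hqu : q ≠ u)
    (hwp : w ≠ p) (hwq : w ≠ q) (hwu : w ≠ u) (h12 : a₁ ≠ a₂)
    (hp : (p, a₁) ∈ contactPairs P S) (hp2 : (p, a₂) ∈ contactPairs P S)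
    (hq : (q, a₃) ∈ contactPairs P S) (hu : (u, a₄) ∈ contactPairs P S)
    (hw : (w, a₅) ∈ contactPairs P S) :
    5 ≤ (contactPairs P S).ncard := by
  classical
  have hsub : ↑({(w, a₅), (p, a₁), (p, a₂), (q, a₃), (u, a₄)} : Finset ((ℝ × ℝ) × SqSide)) ⊆ contactPairs P S := by
    intro x hx
    simp only [Finset.coe_insert, Finset.coe_singleton, Set.mem_insert_iff, Set.mem_singleton_iff] at hx
    rcases hx with h | h | h | h | h <;> (subst h; assumption)
  have h4 : ({(p, a₁), (p, a₂), (q, a₃), (u, a₄)} : Finset ((ℝ × ℝ) × SqSide)).card = 4 := by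
    rw [Finset.card_insert_of_notMem, Finset.card_insert_of_notMem, Finset.card_insert_of_notMem,
      Finset.card_singleton] <;>
      simp [Prod.mk.injEq, hpq, hpu, hqu, h12]
  have hcard : ({(w, a₅), (p, a₁), (p, a₂), (q, a₃), (u, a₄)} : Finset ((ℝ × ℝ) × SqSide)).card = 5 := by
    rw [Finset.card_insert_of_notMem, h4]
    simp only [Finset.mem_insert, Finset.mem_singleton, Prod.mk.injEq, not_or]
    exact ⟨fun h => hwp h.1, fun h => hwp h.1, fun h => hwq h.1, fun h => hwu h.1⟩
  calc (5:ℕ) = _ := hcard.symm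
    _ ≤ _ := le_ncard_of_finset _ hsub (contactPairs_finite P S)

/-- The endgame: a pinned empty square yields a (4,3)-square after normalization. -/
lemma endgame {P : Finset (ℝ × ℝ)} (hgp : GenPos P) (S : Square) (hr : 0 ≤ S.r)
    {p q u : ℝ × ℝ} (hpP : p ∈ P) (hqP : q ∈ P) (huP : u ∈ P)
    (hpq : p ≠ q) (hpu : p ≠ u) (hqu : q ≠ u)
    {a₁ a₂ a₃ a₄ : SqSide} (h12 : a₁ ≠ a₂)
    (hs1 : S.OnSide a₁ p) (hs2 : S.OnSide a₂ p) (hs3 : S.OnSide a₃ q) (hs4 : S.OnSide a₄ u)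
    (hemp : ∀ w ∈ P, ¬ S.InteriorMem w) :
    ∃ S' : Square, Is4kSquare P 3 S' ∧ p ∈ contactPoints P S' ∧ q ∈ contactPoints P S' := by
  obtain ⟨S', hval, hr', hint, σ, hσ⟩ := norm_spec S hr
  have hs1' := (hσ a₁ p).mp hs1
  have hs2' := (hσ a₂ p).mp hs2
  have hs3' := (hσ a₃ q).mp hs3
  have hs4' := (hσ a₄ u).mp hs4
  have h12' : σ a₁ ≠ σ a₂ := fun h => h12 (σ.injective h)
  have hemp' : ∀ w ∈ P, ¬ S'.InteriorMem w := fun w hw hmem => hemp w hw ((hint w).mp hmem)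
  have hm1 : (p, σ a₁) ∈ contactPairs P S' := ⟨hpP, hs1'⟩
  have hm2 : (p, σ a₂) ∈ contactPairs P S' := ⟨hpP, hs2'⟩
  have hm3 : (q, σ a₃) ∈ contactPairs P S' := ⟨hqP, hs3'⟩
  have hm4 : (u, σ a₄) ∈ contactPairs P S' := ⟨huP, hs4'⟩
  have hle := hgp S' hval
  have hge := ncard_pair_lower hpq hpu hqu h12' hm1 hm2 hm3 hm4
  have hpairs : (contactPairs P S').ncard = 4 := le_antisymm hle hge
  -- contact points = {p, q, u}
  have hcp : contactPoints P S' = {p, q, u} := by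
    ext w
    constructor
    · rintro ⟨hwP, a₅, hside⟩
      by_contra hcon
      simp only [Set.mem_insert_iff, Set.mem_singleton_iff, not_or] at hcon
      obtain ⟨hwp, hwq, hwu⟩ := hcon
      have := ncard_five hpq hpu hqu hwp hwq hwu h12' hm1 hm2 hm3 hm4 ⟨hwP, hside⟩
      omega
    · intro hw
      rcases hw with h | h | h <;> subst h
      · exact ⟨hpP, σ a₁, hs1'⟩
      · exact ⟨hqP, σ a₃, hs3'⟩
      · exact ⟨huP, σ a₄, hs4'⟩
  have hcp3 : (contactPoints P S').ncard = 3 := by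
    rw [hcp]
    rw [Set.ncard_insert_of_notMem (by simp [hpq, hpu]), Set.ncard_insert_of_notMem (by simp [hqu]),
      Set.ncard_singleton]
  refine ⟨S', ⟨⟨⟨hval, hemp'⟩, hpairs⟩, hcp3⟩, ⟨hpP, σ a₁, hs1'⟩, ⟨hqP, σ a₃, hs3'⟩⟩

end Sq43

namespace Sq43

/-- Three distinct collinear points give a square with 5 contact pairs. -/
lemma fivepair {P : Finset (ℝ × ℝ)} (hgp : GenPos P) (p : ℝ × ℝ) (φ x₁ x₂ x₃ : ℝ)
    {e₁ e₂ e₃ : ℝ × ℝ} (h1P : e₁ ∈ P) (h2P : e₂ ∈ P) (h3P : e₃ ∈ P)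
    (h12 : e₁ ≠ e₂) (h13 : e₁ ≠ e₃) (h23 : e₂ ≠ e₃)
    (hx12 : x₁ ≤ x₂) (hx23 : x₂ ≤ x₃) (hx13 : x₁ < x₃)
    (he11 : e₁.1 = p.1 + x₁ * Real.cos φ) (he12 : e₁.2 = p.2 + x₁ * Real.sin φ)
    (he21 : e₂.1 = p.1 + x₂ * Real.cos φ) (he22 : e₂.2 = p.2 + x₂ * Real.sin φ)
    (he31 : e₃.1 = p.1 + x₃ * Real.cos φ) (he32 : e₃.2 = p.2 + x₃ * Real.sin φ) :
    False := by
  classical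
  set m : ℝ := (x₁ + x₃)/2 with hm
  set rr : ℝ := (x₃ - x₁)/2 with hrr
  have hrrpos : 0 < rr := by rw [hrr]; linarith
  set S : Square := Square.mk (p.1 + m * Real.cos φ + rr * Real.sin φ,
                               p.2 + m * Real.sin φ - rr * Real.cos φ) rr φ with hS
  have pyth := Real.sin_sq_add_cos_sq φ
  have hlx : ∀ (z : ℝ × ℝ) (x : ℝ), z.1 = p.1 + x * Real.cos φ → z.2 = p.2 + x * Real.sin φ →
      S.lx z = x - m := by
    intro z x hz1 hz2
    simp only [hS, Square.lx, hz1, hz2]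
    linear_combination (x - m) * pyth
  have hly : ∀ (z : ℝ × ℝ) (x : ℝ), z.1 = p.1 + x * Real.cos φ → z.2 = p.2 + x * Real.sin φ →
      S.ly z = rr := by
    intro z x hz1 hz2
    simp only [hS, Square.ly, hz1, hz2]
    linear_combination rr * pyth
  have hlx1 := hlx e₁ x₁ he11 he12
  have hlx2 := hlx e₂ x₂ he21 he22
  have hlx3 := hlx e₃ x₃ he31 he32
  have hly1 := hly e₁ x₁ he11 he12
  have hly2 := hly e₂ x₂ he21 he22
  have hly3 := hly e₃ x₃ he31 he32
  have hSr : S.r = rr := rfl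
  have habs1 : |S.lx e₁| ≤ S.r := by rw [hlx1, hSr]; rw [abs_le]; constructor <;> [linarith; linarith]
  have habs2 : |S.lx e₂| ≤ S.r := by rw [hlx2, hSr]; rw [abs_le]; constructor <;> [linarith; linarith]
  have habs3 : |S.lx e₃| ≤ S.r := by rw [hlx3, hSr]; rw [abs_le]; constructor <;> [linarith; linarith]
  have htop1 : S.OnSide SqSide.top e₁ := ⟨by rw [hly1], habs1⟩
  have htop2 : S.OnSide SqSide.top e₂ := ⟨by rw [hly2], habs2⟩
  have htop3 : S.OnSide SqSide.top e₃ := ⟨by rw [hly3], habs3⟩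
  have hleft1 : S.OnSide SqSide.left e₁ := by
    refine ⟨by rw [hlx1, hSr, hm, hrr]; ring, ?_⟩
    rw [hly1, hSr]; rw [abs_le]; constructor <;> linarith
  have hright3 : S.OnSide SqSide.right e₃ := by
    refine ⟨by rw [hlx3, hSr]; rw [hm, hrr]; ring, ?_⟩
    rw [hly3, hSr]; rw [abs_le]; constructor <;> linarith
  -- five distinct contact pairs
  have hsub : ↑({(e₁, SqSide.left), (e₁, SqSide.top), (e₂, SqSide.top), (e₃, SqSide.top),
      (e₃, SqSide.right)} : Finset ((ℝ × ℝ) × SqSide)) ⊆ contactPairs P S := by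
    intro x hx
    simp only [Finset.coe_insert, Finset.coe_singleton, Set.mem_insert_iff, Set.mem_singleton_iff] at hx
    rcases hx with h | h | h | h | h <;> subst h
    · exact ⟨h1P, hleft1⟩
    · exact ⟨h1P, htop1⟩
    · exact ⟨h2P, htop2⟩
    · exact ⟨h3P, htop3⟩
    · exact ⟨h3P, hright3⟩
  have hcard : ({(e₁, SqSide.left), (e₁, SqSide.top), (e₂, SqSide.top), (e₃, SqSide.top),
      (e₃, SqSide.right)} : Finset ((ℝ × ℝ) × SqSide)).card = 5 := by
    rw [Finset.card_insert_of_notMem, Finset.card_insert_of_notMem, Finset.card_insert_of_notMem,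
      Finset.card_insert_of_notMem, Finset.card_singleton] <;>
      simp [Prod.mk.injEq, h12, h13, h23]
  have hge : 5 ≤ (contactPairs P S).ncard := by
    calc (5:ℕ) = _ := hcard.symm
      _ ≤ _ := le_ncard_of_finset _ hsub (contactPairs_finite P S)
  have hle := genPosAny hgp S (le_of_lt hrrpos)
  omega

/-- under GenPos, no three distinct points of P are collinear -/
lemma no_three_collinear {P : Finset (ℝ × ℝ)} (hgp : GenPos P) {p q u : ℝ × ℝ}
    (hpP : p ∈ P) (hqP : q ∈ P) (huP : u ∈ P)
    (hpq : p ≠ q) (hpu : p ≠ u) (hqu : q ≠ u)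
    {d s φ : ℝ} (hd : 0 < d)
    (hq1 : q.1 = p.1 + d * Real.cos φ) (hq2 : q.2 = p.2 + d * Real.sin φ)
    (hu1 : u.1 = p.1 + s * Real.cos φ) (hu2 : u.2 = p.2 + s * Real.sin φ) :
    False := by
  have hp1 : p.1 = p.1 + 0 * Real.cos φ := by ring
  have hp2 : p.2 = p.2 + 0 * Real.sin φ := by ring
  have hs0 : s ≠ 0 := by
    rintro rfl
    exact hpu (Prod.ext (by rw [hu1]; ring) (by rw [hu2]; ring)).symm
  have hsd : s ≠ d := by
    rintro rfl
    exact hqu (Prod.ext (by rw [hq1, hu1]) (by rw [hq2, hu2]))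
  rcases lt_or_gt_of_ne hs0 with hneg | hpos
  · -- s < 0 : order u, p, q
    exact fivepair hgp p φ s 0 d huP hpP hqP hpu.symm hqu.symm hpq
      (le_of_lt hneg) (le_of_lt hd) (by linarith) hu1 hu2 hp1 hp2 hq1 hq2
  · rcases lt_or_gt_of_ne hsd with hlt | hgt
    · -- 0 < s < d : order p, u, q
      exact fivepair hgp p φ 0 s d hpP huP hqP hpu hpq hqu.symm
        (le_of_lt hpos) (le_of_lt hlt) hd hp1 hp2 hu1 hu2 hq1 hq2
    · -- s > d : order p, q, u
      exact fivepair hgp p φ 0 d s hpP hqP huP hpq hpu hqu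
        (le_of_lt hd) (le_of_lt hgt) (by linarith) hp1 hp2 hq1 hq2 hu1 hu2

end Sq43

namespace Sq43

/-- local coordinates relative to base point `p` in frame of angle `ϑ` -/
noncomputable def az (p : ℝ × ℝ) (ϑ : ℝ) (z : ℝ × ℝ) : ℝ :=
  (z.1 - p.1) * Real.cos ϑ + (z.2 - p.2) * Real.sin ϑ

noncomputable def bz (p : ℝ × ℝ) (ϑ : ℝ) (z : ℝ × ℝ) : ℝ :=
  -(z.1 - p.1) * Real.sin ϑ + (z.2 - p.2) * Real.cos ϑ

/-- family square: `p` sits at the corner `(-rad, -ε rad)` in local coordinates -/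
noncomputable def sqF (p : ℝ × ℝ) (ε ϑ rad : ℝ) : Square :=
  Square.mk (p.1 + rad * (Real.cos ϑ - ε * Real.sin ϑ), p.2 + rad * (Real.sin ϑ + ε * Real.cos ϑ)) rad ϑ

lemma lx_sqF (p : ℝ × ℝ) (ε ϑ rad : ℝ) (z : ℝ × ℝ) :
    (sqF p ε ϑ rad).lx z = az p ϑ z - rad := by
  have pyth := Real.sin_sq_add_cos_sq ϑ
  simp only [sqF, Square.lx, az]
  linear_combination (-rad) * pyth

lemma ly_sqF (p : ℝ × ℝ) (ε ϑ rad : ℝ) (z : ℝ × ℝ) :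
    (sqF p ε ϑ rad).ly z = bz p ϑ z - ε * rad := by
  have pyth := Real.sin_sq_add_cos_sq ϑ
  simp only [sqF, Square.ly, bz]
  linear_combination (-(rad * ε)) * pyth

lemma az_self (p : ℝ × ℝ) (ϑ : ℝ) : az p ϑ p = 0 := by simp [az]

lemma bz_self (p : ℝ × ℝ) (ϑ : ℝ) : bz p ϑ p = 0 := by simp [bz]

lemma sqd_az (p : ℝ × ℝ) (ϑ : ℝ) (z : ℝ × ℝ) :
    sqd p z = (az p ϑ z)^2 + (bz p ϑ z)^2 := by
  have pyth := Real.sin_sq_add_cos_sq ϑ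
  simp only [sqd, az, bz]
  linear_combination (-((z.1-p.1)^2 + (z.2-p.2)^2)) * pyth

lemma sqd_az' (p q : ℝ × ℝ) (ϑ : ℝ) (z : ℝ × ℝ) :
    sqd q z = (az p ϑ z - az p ϑ q)^2 + (bz p ϑ z - bz p ϑ q)^2 := by
  have pyth := Real.sin_sq_add_cos_sq ϑ
  simp only [sqd, az, bz]
  linear_combination (-((z.1-q.1)^2 + (z.2-q.2)^2)) * pyth

lemma az_bz_inj (p : ℝ × ℝ) (ϑ : ℝ) {z w : ℝ × ℝ}
    (h1 : az p ϑ z = az p ϑ w) (h2 : bz p ϑ z = bz p ϑ w) : z = w := by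
  have pyth := Real.sin_sq_add_cos_sq ϑ
  simp only [az, bz] at h1 h2
  refine Prod.ext ?_ ?_
  · linear_combination (Real.cos ϑ) * h1 - (Real.sin ϑ) * h2 - (z.1 - w.1) * pyth
  · linear_combination (Real.sin ϑ) * h1 + (Real.cos ϑ) * h2 - (z.2 - w.2) * pyth

lemma continuous_inf' {ι : Type*} {s : Finset ι} (hs : s.Nonempty) {f : ι → ℝ → ℝ}
    (hf : ∀ i ∈ s, Continuous (f i)) :
    Continuous fun x => s.inf' hs fun i => f i x := by
  classical
  induction hs using Finset.Nonempty.cons_induction with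
  | singleton a => simp only [Finset.inf'_singleton]; exact hf a (Finset.mem_singleton_self a)
  | cons a s ha hs ih =>
      have heq : (fun x => (Finset.cons a s ha).inf' (Finset.cons_nonempty ha) fun i => f i x)
          = fun x => (f a x) ⊓ (s.inf' hs fun i => f i x) := by
        funext x
        exact Finset.inf'_cons hs (fun i => f i x)
      rw [heq]
      exact (hf a (by simp)).min (ih (fun i hi => hf i (by simp [hi])))

lemma cont_az (p : ℝ × ℝ) (z : ℝ × ℝ) {g : ℝ → ℝ} (hg : Continuous g) :
    Continuous fun x => az p (g x) z := by
  unfold az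
  fun_prop

lemma cont_bz (p : ℝ × ℝ) (z : ℝ × ℝ) {g : ℝ → ℝ} (hg : Continuous g) :
    Continuous fun x => bz p (g x) z := by
  unfold bz
  fun_prop

end Sq43

namespace Sq43

open Classical in
/-- the vertical side label matching sign `ε` -/
noncomputable def vert (ε : ℝ) : SqSide := if ε = 1 then SqSide.top else SqSide.bottom

lemma onSide_vert {S : Square} {z : ℝ × ℝ} {ε : ℝ} (hε : ε = 1 ∨ ε = -1)
    (h : S.ly z = ε * S.r) (h2 : |S.lx z| ≤ S.r) : S.OnSide (vert ε) z := by
  rcases hε with h' | h' <;> subst h'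
  · simp only [vert, if_pos rfl]
    exact ⟨by rw [h]; ring, h2⟩
  · have : vert (-1 : ℝ) = SqSide.bottom := by
      simp only [vert, if_neg (by norm_num : ¬(-1 : ℝ) = 1)]
    rw [this]
    exact ⟨by rw [h]; ring, h2⟩

lemma vert_ne_left (ε : ℝ) : vert ε ≠ SqSide.left := by
  unfold vert; split <;> decide

lemma sq_eq_forces {x c : ℝ} (hgt : -c < x) (hsq : x^2 = c^2) : x = c := by
  have h : (x - c) * (x + c) = 0 := by nlinarith
  rcases mul_eq_zero.mp h with h' | h'
  · linarith
  · exfalso; nlinarith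

lemma cont_g (p : ℝ × ℝ) (ε : ℝ) (u : ℝ × ℝ) {Θ Rad : ℝ → ℝ}
    (hΘ : Continuous Θ) (hR : Continuous Rad) :
    Continuous fun x => max |az p (Θ x) u - Rad x| |bz p (Θ x) u - ε * Rad x| - Rad x := by
  have h1 := cont_az p u hΘ
  have h2 := cont_bz p u hΘ
  fun_prop

end Sq43

namespace Sq43

lemma neg_eps {ε : ℝ} (hε : ε = 1 ∨ ε = -1) : -ε = 1 ∨ -ε = -1 := by
  rcases hε with h | h <;> subst h <;> norm_num

lemma corner_p (p : ℝ × ℝ) {ε : ℝ} (hε : ε = 1 ∨ ε = -1) (ϑ rad : ℝ) (hrad : 0 ≤ rad) :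
    (sqF p ε ϑ rad).OnSide SqSide.left p ∧ (sqF p ε ϑ rad).OnSide (vert (-ε)) p := by
  have hlx : (sqF p ε ϑ rad).lx p = -rad := by rw [lx_sqF, az_self]; ring
  have hly : (sqF p ε ϑ rad).ly p = (-ε) * rad := by rw [ly_sqF, bz_self]; ring
  have hr : (sqF p ε ϑ rad).r = rad := rfl
  have habsy : |(sqF p ε ϑ rad).ly p| ≤ rad := by
    rw [hly]; rcases hε with h | h <;> subst h <;> rw [abs_le] <;> constructor <;> linarith
  have habsx : |(sqF p ε ϑ rad).lx p| ≤ rad := by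
    rw [hlx, abs_neg, abs_of_nonneg hrad]
  constructor
  · exact ⟨by rw [hlx, hr], by rw [hr]; exact habsy⟩
  · exact onSide_vert (neg_eps hε) (by rw [hly, hr]) (by rw [hr]; exact habsx)

/-- Shared final step for both sweep families. -/
lemma closeout {P : Finset (ℝ × ℝ)} (hgp : GenPos P) {p q : ℝ × ℝ}
    (hpP : p ∈ P) (hqP : q ∈ P) (hpq : p ≠ q)
    {ε : ℝ} (hε : ε = 1 ∨ ε = -1) (ϑ rad : ℝ) (hrad : 0 < rad)
    (hqs : ∃ a₃, (sqF p ε ϑ rad).OnSide a₃ q)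
    (hqni : ¬ (sqF p ε ϑ rad).InteriorMem q)
    (hall : ∀ u ∈ (P.erase p).erase q, rad ≤ max |az p ϑ u - rad| |bz p ϑ u - ε*rad|)
    (hex : ∃ u₁ ∈ (P.erase p).erase q, max |az p ϑ u₁ - rad| |bz p ϑ u₁ - ε*rad| = rad) :
    ∃ S' : Square, Is4kSquare P 3 S' ∧ p ∈ contactPoints P S' ∧ q ∈ contactPoints P S' := by
  obtain ⟨u₁, hu₁Q, hu₁max⟩ := hex
  rw [Finset.mem_erase, Finset.mem_erase] at hu₁Q
  obtain ⟨hu₁q, hu₁p, hu₁P⟩ := hu₁Q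
  set S : Square := sqF p ε ϑ rad with hS
  have hr : S.r = rad := rfl
  have hlxu : S.lx u₁ = az p ϑ u₁ - rad := lx_sqF p ε ϑ rad u₁
  have hlyu : S.ly u₁ = bz p ϑ u₁ - ε*rad := ly_sqF p ε ϑ rad u₁
  -- u₁ lies on some side
  have hu₁side : ∃ a₄, S.OnSide a₄ u₁ := by
    have hA : |S.lx u₁| ≤ rad := by rw [hlxu]; exact le_of_le_of_eq (le_max_left _ _) hu₁max
    have hB : |S.ly u₁| ≤ rad := by rw [hlyu]; exact le_of_le_of_eq (le_max_right _ _) hu₁max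
    rcases max_choice |az p ϑ u₁ - rad| |bz p ϑ u₁ - ε*rad| with hc | hc
    · have : |S.lx u₁| = rad := by rw [hlxu, ← hc, hu₁max]
      rcases (abs_eq (le_of_lt hrad)).mp this with h | h
      · exact ⟨SqSide.right, by rw [Square.OnSide, hr]; exact ⟨h, hB⟩⟩
      · exact ⟨SqSide.left, by rw [Square.OnSide, hr]; exact ⟨h, hB⟩⟩
    · have : |S.ly u₁| = rad := by rw [hlyu, ← hc, hu₁max]
      rcases (abs_eq (le_of_lt hrad)).mp this with h | h
      · exact ⟨SqSide.top, by rw [Square.OnSide, hr]; exact ⟨h, hA⟩⟩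
      · exact ⟨SqSide.bottom, by rw [Square.OnSide, hr]; exact ⟨h, hA⟩⟩
  obtain ⟨a₄, ha₄⟩ := hu₁side
  obtain ⟨a₃, ha₃⟩ := hqs
  obtain ⟨hpleft, hpvert⟩ := corner_p p hε ϑ rad (le_of_lt hrad)
  -- emptiness
  have hemp : ∀ w ∈ P, ¬ S.InteriorMem w := by
    intro w hwP hint
    obtain ⟨hIx, hIy⟩ := hint
    rcases eq_or_ne w p with rfl | hwp
    · rw [lx_sqF, az_self, hr] at hIx
      rw [show (0:ℝ) - rad = -rad by ring, abs_neg, abs_of_nonneg (le_of_lt hrad)] at hIx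
      exact lt_irrefl _ hIx
    rcases eq_or_ne w q with rfl | hwq
    · exact hqni ⟨hIx, hIy⟩
    · have hwQ : w ∈ (P.erase p).erase q := by
        rw [Finset.mem_erase, Finset.mem_erase]; exact ⟨hwq, hwp, hwP⟩
      have hge := hall w hwQ
      have hIx' : |az p ϑ w - rad| < rad := by
        have := lx_sqF p ε ϑ rad w; rw [hr] at hIx; rw [← this]; exact hIx
      have hIy' : |bz p ϑ w - ε*rad| < rad := by
        have := ly_sqF p ε ϑ rad w; rw [hr] at hIy; rw [← this]; exact hIy
      have := max_lt hIx' hIy'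
      linarith
  exact endgame hgp S (le_of_lt hrad) hpP hqP hu₁P hpq (Ne.symm hu₁p) (Ne.symm hu₁q)
    (Ne.symm (vert_ne_left (-ε))) hpleft hpvert ha₃ ha₄ hemp

end Sq43

namespace Sq43

set_option maxHeartbeats 1000000 in
/-- The core sweep lemma. -/
lemma core {P : Finset (ℝ × ℝ)} (hgp : GenPos P) {p q : ℝ × ℝ}
    (hpP : p ∈ P) (hqP : q ∈ P) (hpq : p ≠ q)
    {d φ : ℝ} (hd : 0 < d)
    (hq1 : q.1 - p.1 = d * Real.cos φ) (hq2 : q.2 - p.2 = d * Real.sin φ)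
    {ε : ℝ} (hε : ε = 1 ∨ ε = -1)
    (H : ∀ w ∈ P, w ≠ p → w ≠ q → d^2 ≤ sqd p w ∨ d^2 ≤ sqd q w)
    {u₀ : ℝ × ℝ} (hu₀P : u₀ ∈ P) (h0p : u₀ ≠ p) (h0q : u₀ ≠ q)
    (hs : 0 < (u₀.1 - p.1) * Real.cos φ + (u₀.2 - p.2) * Real.sin φ)
    (ht : 0 < -ε * ((u₀.2 - p.2) * Real.cos φ - (u₀.1 - p.1) * Real.sin φ)) :
    ∃ S' : Square, Is4kSquare P 3 S' ∧ p ∈ contactPoints P S' ∧ q ∈ contactPoints P S' := by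
  classical
  have pi_pos := Real.pi_pos
  have hε2 : ε * ε = 1 := by rcases hε with h | h <;> rw [h] <;> norm_num
  -- coordinates of q in the rotating frame
  have azq : ∀ ψ : ℝ, az p (φ - ε*ψ) q = d * Real.cos ψ := by
    intro ψ
    have h := Real.cos_sub φ (φ - ε*ψ)
    rw [show φ - (φ - ε*ψ) = ε*ψ by ring] at h
    have hc : Real.cos (ε*ψ) = Real.cos ψ := by rcases hε with h' | h' <;> simp [h']
    rw [← hc]
    simp only [az, hq1, hq2]
    linear_combination (-d) * h
  have bzq : ∀ ψ : ℝ, bz p (φ - ε*ψ) q = ε * (d * Real.sin ψ) := by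
    intro ψ
    have h := Real.sin_sub φ (φ - ε*ψ)
    rw [show φ - (φ - ε*ψ) = ε*ψ by ring] at h
    have hc : Real.sin (ε*ψ) = ε * Real.sin ψ := by rcases hε with h' | h' <;> simp [h']
    rw [show ε * (d * Real.sin ψ) = d * (ε * Real.sin ψ) by ring, ← hc]
    simp only [bz, hq1, hq2]
    linear_combination (-d) * h
  -- the point set without p, q
  set Q : Finset (ℝ × ℝ) := (P.erase p).erase q with hQdef
  have hu₀Q : u₀ ∈ Q := by
    simp only [hQdef, Finset.mem_erase]
    exact ⟨h0q, h0p, hu₀P⟩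
  have hQne : Q.Nonempty := ⟨u₀, hu₀Q⟩
  have hQmem : ∀ u ∈ Q, u ∈ P ∧ u ≠ p ∧ u ≠ q := by
    intro u hu
    simp only [hQdef, Finset.mem_erase] at hu
    exact ⟨hu.2.2, hu.2.1, hu.1⟩
  -- the sweep functions
  set g : ℝ → ℝ → (ℝ × ℝ) → ℝ :=
    fun ϑ rad u => max |az p ϑ u - rad| |bz p ϑ u - ε * rad| - rad with hgdef
  set h1 : ℝ → ℝ := fun ψ => Q.inf' hQne (g (φ - ε*ψ) (d/2 * Real.sin ψ)) with h1def
  have hcont1 : Continuous h1 := by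
    apply continuous_inf' hQne
    intro u hu
    exact cont_g p ε u (by fun_prop) (by fun_prop)
  -- positivity at the diagonal position ψ = π/4
  have hquarter : 0 < h1 (Real.pi/4) := by
    rw [h1def]
    refine (Finset.lt_inf'_iff hQne).mpr ?_
    intro u huQ
    obtain ⟨huP, hup, huq⟩ := hQmem u huQ
    by_contra hle
    push_neg at hle
    set ϑ : ℝ := φ - ε*(Real.pi/4) with hϑdef
    set r : ℝ := d/2 * Real.sin (Real.pi/4) with hrdef
    have hs2 : Real.sqrt 2 ^ 2 = 2 := Real.sq_sqrt (by norm_num)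
    have hs2pos : 0 < Real.sqrt 2 := Real.sqrt_pos.mpr (by norm_num)
    have hr : r = d * Real.sqrt 2 / 4 := by rw [hrdef, Real.sin_pi_div_four]; ring
    have hr2 : r^2 = d^2/8 := by rw [hr]; nlinarith [hs2]
    have hrpos : 0 < r := by rw [hr]; positivity
    set A : ℝ := az p ϑ u with hAdef
    set B : ℝ := bz p ϑ u with hBdef
    have hboth : |A - r| ≤ r ∧ |B - ε*r| ≤ r := by
      have : max |A - r| |B - ε*r| ≤ r := by
        have := hle
        simp only [hgdef] at this
        linarith [this]
      exact ⟨le_trans (le_max_left _ _) this, le_trans (le_max_right _ _) this⟩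
    have hA := abs_le.mp hboth.1
    have hB := abs_le.mp hboth.2
    have hA0 : 0 ≤ A := by linarith [hA.1]
    have hA2r : A ≤ 2*r := by linarith [hA.2]
    have hB2 : B^2 ≤ 4*r^2 := by
      rcases hε with h' | h' <;> subst h' <;> nlinarith [hB.1, hB.2, hrpos]
    have haq : az p ϑ q = 2*r := by
      rw [hϑdef, azq (Real.pi/4), Real.cos_pi_div_four, hr]; ring
    have hbq : bz p ϑ q = ε*(2*r) := by
      rw [hϑdef, bzq (Real.pi/4), Real.sin_pi_div_four, hr]; ring
    have hsqdpu : sqd p u = A^2 + B^2 := sqd_az p ϑ u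
    have hsqdqu : sqd q u = (A - 2*r)^2 + (B - ε*(2*r))^2 := by
      rw [sqd_az' p q ϑ u, haq, hbq]
    have hA2b : A^2 ≤ 4*r^2 := by nlinarith [mul_nonneg hA0 (sub_nonneg.mpr hA2r)]
    have hAb2 : (A - 2*r)^2 ≤ 4*r^2 := by nlinarith [mul_nonneg hA0 (sub_nonneg.mpr hA2r)]
    have hBb2 : (B - ε*(2*r))^2 ≤ 4*r^2 := by
      rcases hε with h' | h' <;> subst h' <;> nlinarith [hB.1, hB.2, hrpos]
    have hd2 : d^2 = 8*r^2 := by linarith [hr2]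
    rcases H u huP hup huq with hH | hH
    · -- equality forces u = q
      have heq : A^2 + B^2 = d^2 := by
        rw [hsqdpu] at hH
        linarith [hH, hA2b, hB2, hd2]
      have hAval : A = 2*r := by
        have hA2 : A^2 = 4*r^2 := by linarith [heq, hd2, hB2, hA2b]
        exact sq_eq_forces (by linarith [hrpos, hA0] : -(2*r) < A) (by rw [hA2]; ring)
      have hBval : B = ε*(2*r) := by
        have hA4 : A^2 = 4*r^2 := by rw [hAval]; ring
        have hB4 : B^2 = 4*r^2 := by linarith [heq, hd2, hA4]
        rcases hε with h' | h' <;> subst h'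
        · have : B = 2*r := sq_eq_forces (by linarith [hrpos, hB.1] : -(2*r) < B) (by rw [hB4]; ring)
          rw [this]; ring
        · have : -B = 2*r := by
            apply sq_eq_forces (by linarith [hrpos, hB.2] : -(2*r) < -B)
            rw [show (-B)^2 = B^2 by ring, hB4]; ring
          linarith [this]
      exact huq (az_bz_inj p ϑ (by rw [← hAdef, hAval, haq]) (by rw [← hBdef, hBval, hbq]))
    · -- equality forces u = p
      have heq : (A - 2*r)^2 + (B - ε*(2*r))^2 = d^2 := by
        rw [hsqdqu] at hH
        linarith [hH, hAb2, hBb2, hd2]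
      have hAval : A = 0 := by
        have hA2 : (A - 2*r)^2 = 4*r^2 := by linarith [heq, hd2, hBb2, hAb2]
        have := sq_eq_forces (by linarith [hrpos, hA2r] : -(2*r) < 2*r - A)
          (by rw [show (2*r - A)^2 = (A - 2*r)^2 by ring, hA2]; ring)
        linarith
      have hBval : B = 0 := by
        have hB4 : (B - ε*(2*r))^2 = 4*r^2 := by linarith [heq, hd2, hAb2, hBb2]
        rcases hε with h' | h' <;> subst h'
        · have : 2*r - B = 2*r := by
            apply sq_eq_forces (by linarith [hrpos, hB.2] : -(2*r) < 2*r - B)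
            rw [show (2*r - B)^2 = (B - 1*(2*r))^2 by ring, hB4]; ring
          linarith
        · have : B + 2*r = 2*r := by
            apply sq_eq_forces (by linarith [hrpos, hB.1] : -(2*r) < B + 2*r)
            rw [show (B + 2*r)^2 = (B - (-1)*(2*r))^2 by ring, hB4]; ring
          linarith
      exact hup (az_bz_inj p ϑ (by rw [← hAdef, hAval, az_self]) (by rw [← hBdef, hBval, bz_self]))
  -- case split on the value at the end of the rotation family
  rcases le_or_gt (h1 (Real.pi/2)) 0 with hcaseA | hcaseB
  · -- rotation family hits an event
    have hle : (Real.pi)/4 ≤ Real.pi/2 := by linarith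
    obtain ⟨ψ₀, hψmem, hroot⟩ :=
      intermediate_value_Icc' hle hcont1.continuousOn ⟨hcaseA, le_of_lt hquarter⟩
    obtain ⟨hψa, hψb⟩ := hψmem
    have hroot0 : Q.inf' hQne (g (φ - ε*ψ₀) (d/2 * Real.sin ψ₀)) = 0 := by
      rw [h1def] at hroot; exact hroot
    set ϑ₀ : ℝ := φ - ε*ψ₀ with hϑ₀def
    set r₀ : ℝ := d/2 * Real.sin ψ₀ with hr₀def
    have hsinpos : 0 < Real.sin ψ₀ :=
      Real.sin_pos_of_pos_of_lt_pi (by linarith) (by linarith)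
    have hr₀ : 0 < r₀ := by rw [hr₀def]; positivity
    -- q is on the side vert ε
    have hlyq : (sqF p ε ϑ₀ r₀).ly q = ε * r₀ := by
      rw [ly_sqF, hϑ₀def, bzq ψ₀, hr₀def]; ring
    have hlxq : (sqF p ε ϑ₀ r₀).lx q = d * Real.cos ψ₀ - r₀ := by
      rw [lx_sqF, hϑ₀def, azq ψ₀]
    have hcosle : Real.cos ψ₀ ≤ Real.sin ψ₀ := by
      have h1' : Real.cos ψ₀ ≤ Real.cos (Real.pi/2 - ψ₀) :=
        Real.cos_le_cos_of_nonneg_of_le_pi (by linarith) (by linarith) (by linarith)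
      rwa [Real.cos_pi_div_two_sub] at h1'
    have hcos0 : 0 ≤ Real.cos ψ₀ := Real.cos_nonneg_of_mem_Icc ⟨by linarith, hψb⟩
    have hdc0 : 0 ≤ d * Real.cos ψ₀ := mul_nonneg (le_of_lt hd) hcos0
    have hdcs : d * Real.cos ψ₀ ≤ d * Real.sin ψ₀ :=
      mul_le_mul_of_nonneg_left hcosle (le_of_lt hd)
    have habsq : |(sqF p ε ϑ₀ r₀).lx q| ≤ r₀ := by
      rw [hlxq, abs_le, hr₀def]
      constructor <;> linarith
    have hqside : (sqF p ε ϑ₀ r₀).OnSide (vert ε) q :=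
      onSide_vert hε (by rw [hlyq]; rfl) habsq
    have hqni : ¬ (sqF p ε ϑ₀ r₀).InteriorMem q := by
      rintro ⟨-, hIy⟩
      rw [hlyq] at hIy
      have hIy' : |ε*r₀| < r₀ := hIy
      rcases hε with h' | h' <;> subst h'
      · rw [one_mul, abs_of_pos hr₀] at hIy'; exact lt_irrefl _ hIy'
      · rw [neg_one_mul, abs_neg, abs_of_pos hr₀] at hIy'; exact lt_irrefl _ hIy' 
    apply closeout hgp hpP hqP hpq hε ϑ₀ r₀ hr₀ ⟨vert ε, hqside⟩ hqni
    · intro u huQ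
      have := Finset.inf'_le (g ϑ₀ r₀) huQ
      rw [hroot0] at this
      simp only [hgdef] at this
      linarith
    · obtain ⟨u₁, hu₁Q, hequ⟩ := Finset.exists_mem_eq_inf' hQne (g ϑ₀ r₀)
      refine ⟨u₁, hu₁Q, ?_⟩
      have : g ϑ₀ r₀ u₁ = 0 := by rw [← hequ]; exact hroot0
      simp only [hgdef] at this
      linarith
  · -- growth family
    set ϑ₂ : ℝ := φ - ε*(Real.pi/2) with hϑ₂def
    have hazu₀ : az p ϑ₂ u₀ = -ε * ((u₀.2 - p.2) * Real.cos φ - (u₀.1 - p.1) * Real.sin φ) := by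
      rcases hε with h' | h' <;> subst h'
      · rw [hϑ₂def, show φ - 1*(Real.pi/2) = φ - Real.pi/2 by ring]
        simp only [az, Real.cos_sub_pi_div_two, Real.sin_sub_pi_div_two]
        ring
      · rw [hϑ₂def, show φ - (-1)*(Real.pi/2) = φ + Real.pi/2 by ring]
        simp only [az, Real.cos_add_pi_div_two, Real.sin_add_pi_div_two]
        ring
    have hbzu₀ : bz p ϑ₂ u₀ = ε * ((u₀.1 - p.1) * Real.cos φ + (u₀.2 - p.2) * Real.sin φ) := by
      rcases hε with h' | h' <;> subst h'
      · rw [hϑ₂def, show φ - 1*(Real.pi/2) = φ - Real.pi/2 by ring]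
        simp only [bz, Real.cos_sub_pi_div_two, Real.sin_sub_pi_div_two]
        ring
      · rw [hϑ₂def, show φ - (-1)*(Real.pi/2) = φ + Real.pi/2 by ring]
        simp only [bz, Real.cos_add_pi_div_two, Real.sin_add_pi_div_two]
        ring
    set sval : ℝ := (u₀.1 - p.1) * Real.cos φ + (u₀.2 - p.2) * Real.sin φ with hsval
    have hA₀pos : 0 < az p ϑ₂ u₀ := by rw [hazu₀]; exact ht
    have hspos : 0 < sval := hs
    set R : ℝ := d/2 + az p ϑ₂ u₀ + sval + 1 with hRdef
    set h2 : ℝ → ℝ := fun x => Q.inf' hQne (g ϑ₂ x) with h2def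
    have hcont2 : Continuous h2 := by
      apply continuous_inf' hQne
      intro u hu
      exact cont_g p ε u continuous_const continuous_id
    have hstart : 0 < h2 (d/2) := by
      have heq : h2 (d/2) = h1 (Real.pi/2) := by
        rw [h2def, h1def]
        simp only [hϑ₂def, Real.sin_pi_div_two, mul_one]
      rw [heq]; exact hcaseB
    have hend : h2 R < 0 := by
      have hgu₀ : g ϑ₂ R u₀ < 0 := by
        simp only [hgdef]
        have h1' : |az p ϑ₂ u₀ - R| < R := by
          rw [abs_lt]; constructor <;> rw [hRdef] <;> linarith
        have h2' : |bz p ϑ₂ u₀ - ε*R| < R := by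
          rw [hbzu₀]
          rcases hε with h' | h' <;> subst h' <;> rw [abs_lt] <;> constructor <;>
            rw [hRdef] <;> linarith
        have := max_lt h1' h2'
        linarith
      calc h2 R ≤ g ϑ₂ R u₀ := Finset.inf'_le _ hu₀Q
        _ < 0 := hgu₀
    have hd2R : d/2 ≤ R := by rw [hRdef]; linarith
    obtain ⟨x₀, hxmem, hroot⟩ :=
      intermediate_value_Icc' hd2R hcont2.continuousOn ⟨le_of_lt hend, le_of_lt hstart⟩
    obtain ⟨hxa, hxb⟩ := hxmem
    have hroot0 : Q.inf' hQne (g ϑ₂ x₀) = 0 := by rw [h2def] at hroot; exact hroot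
    have hx₀ : 0 < x₀ := by linarith
    -- q is on the left side
    have hlxq : (sqF p ε ϑ₂ x₀).lx q = -x₀ := by
      rw [lx_sqF]
      have : az p ϑ₂ q = 0 := by
        rw [hϑ₂def, azq (Real.pi/2), Real.cos_pi_div_two, mul_zero]
      rw [this]; ring
    have hlyq : (sqF p ε ϑ₂ x₀).ly q = ε * (d - x₀) := by
      rw [ly_sqF]
      have : bz p ϑ₂ q = ε * d := by
        rw [hϑ₂def, bzq (Real.pi/2), Real.sin_pi_div_two, mul_one]
      rw [this]; ring
    have habsyq : |(sqF p ε ϑ₂ x₀).ly q| ≤ x₀ := by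
      rw [hlyq]
      rcases hε with h' | h' <;> subst h' <;> rw [abs_le] <;> constructor <;> linarith
    have hqside : (sqF p ε ϑ₂ x₀).OnSide SqSide.left q := by
      refine ⟨?_, habsyq⟩
      rw [hlxq]; rfl
    have hqni : ¬ (sqF p ε ϑ₂ x₀).InteriorMem q := by
      rintro ⟨hIx, -⟩
      rw [hlxq, abs_neg, abs_of_pos hx₀] at hIx
      exact lt_irrefl _ hIx
    apply closeout hgp hpP hqP hpq hε ϑ₂ x₀ hx₀ ⟨SqSide.left, hqside⟩ hqni
    · intro u huQ
      have := Finset.inf'_le (g ϑ₂ x₀) huQ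
      rw [hroot0] at this
      simp only [hgdef] at this
      linarith
    · obtain ⟨u₁, hu₁Q, hequ⟩ := Finset.exists_mem_eq_inf' hQne (g ϑ₂ x₀)
      refine ⟨u₁, hu₁Q, ?_⟩
      have : g ϑ₂ x₀ u₁ = 0 := by rw [← hequ]; exact hroot0
      simp only [hgdef] at this
      linarith

end Sq43

namespace Sq43

lemma core' {P : Finset (ℝ × ℝ)} (hgp : GenPos P) {p q : ℝ × ℝ}
    (hpP : p ∈ P) (hqP : q ∈ P) (hpq : p ≠ q)
    {d φ : ℝ} (hd : 0 < d)
    (hq1 : q.1 - p.1 = d * Real.cos φ) (hq2 : q.2 - p.2 = d * Real.sin φ)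
    {ε : ℝ} (hε : ε = 1 ∨ ε = -1)
    (H : ∀ w ∈ P, w ≠ p → w ≠ q → d^2 ≤ sqd p w ∨ d^2 ≤ sqd q w)
    {u₀ : ℝ × ℝ} (hu₀P : u₀ ∈ P) (h0p : u₀ ≠ p) (h0q : u₀ ≠ q)
    (hs : 0 < (u₀.1 - p.1) * Real.cos φ + (u₀.2 - p.2) * Real.sin φ)
    (ht : 0 < -ε * ((u₀.2 - p.2) * Real.cos φ - (u₀.1 - p.1) * Real.sin φ)) :
    ∃ S' : Square, Is4kSquare P 3 S' ∧ p ∈ contactPoints P S' := by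
  obtain ⟨S', h1, h2, -⟩ := core hgp hpP hqP hpq hd hq1 hq2 hε H hu₀P h0p h0q hs ht
  exact ⟨S', h1, h2⟩

lemma per_point {P : Finset (ℝ × ℝ)} (hgp : GenPos P) (h3 : 3 ≤ P.card) :
    ∀ p ∈ P, ∃ S : Square, Is4kSquare P 3 S ∧ p ∈ contactPoints P S := by
  classical
  intro p hp
  -- nearest neighbour q of p
  have hne : (P.erase p).Nonempty := by
    rw [← Finset.card_pos, Finset.card_erase_of_mem hp]; omega
  obtain ⟨q, hqmem, hqmin⟩ := Finset.exists_min_image (P.erase p) (sqd p) hne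
  rw [Finset.mem_erase] at hqmem
  obtain ⟨hqp, hqP⟩ := hqmem
  -- polar coordinates of q - p
  set z : ℂ := ⟨q.1 - p.1, q.2 - p.2⟩ with hzdef
  have hz : z ≠ 0 := by
    intro h
    rw [Complex.ext_iff] at h
    simp only [hzdef, Complex.zero_re, Complex.zero_im] at h
    exact hqp (Prod.ext (by linarith [h.1]) (by linarith [h.2]))
  set d : ℝ := ‖z‖ with hddef
  set φ : ℝ := Complex.arg z with hφdef
  have hd : 0 < d := by rw [hddef]; exact norm_pos_iff.mpr hz
  have hq1 : q.1 - p.1 = d * Real.cos φ := by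
    rw [hφdef, Complex.cos_arg hz, ← hddef]
    field_simp
    rfl
  have hq2 : q.2 - p.2 = d * Real.sin φ := by
    rw [hφdef, Complex.sin_arg, ← hddef]
    field_simp
    rfl
  have hd2 : d^2 = sqd p q := by
    rw [hddef, Complex.sq_norm, Complex.normSq_apply, sqd]
    simp only [hzdef]
    ring
  have H : ∀ w ∈ P, w ≠ p → w ≠ q → d^2 ≤ sqd p w ∨ d^2 ≤ sqd q w := by
    intro w hw hwp hwq
    left
    rw [hd2]
    exact hqmin w (Finset.mem_erase.mpr ⟨hwp, hw⟩)
  -- pick a third point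
  have hQne : ((P.erase p).erase q).Nonempty := by
    rw [← Finset.card_pos, Finset.card_erase_of_mem (Finset.mem_erase.mpr ⟨hqp, hqP⟩),
      Finset.card_erase_of_mem hp]
    omega
  obtain ⟨u, huQ⟩ := hQne
  rw [Finset.mem_erase, Finset.mem_erase] at huQ
  obtain ⟨huq, hup, huP⟩ := huQ
  have pyth := Real.sin_sq_add_cos_sq φ
  set tval : ℝ := (u.2 - p.2) * Real.cos φ - (u.1 - p.1) * Real.sin φ with htval
  set sval : ℝ := (u.1 - p.1) * Real.cos φ + (u.2 - p.2) * Real.sin φ with hsval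
  by_cases htz : tval = 0
  · -- u collinear with p, q : contradiction with general position
    exfalso
    have htz' : (u.2 - p.2) * Real.cos φ - (u.1 - p.1) * Real.sin φ = 0 := by
      rw [← htval]; exact htz
    have hu1 : u.1 = p.1 + sval * Real.cos φ := by
      rw [hsval]
      linear_combination (- Real.sin φ) * htz' - (u.1 - p.1) * pyth
    have hu2 : u.2 = p.2 + sval * Real.sin φ := by
      rw [hsval]
      linear_combination (Real.cos φ) * htz' - (u.2 - p.2) * pyth
    exact no_three_collinear hgp hp hqP huP (Ne.symm hqp) (Ne.symm hup) (Ne.symm huq) hd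
      (by linarith [hq1]) (by linarith [hq2]) hu1 hu2
  · -- sign analysis
    have hq1' : p.1 - q.1 = d * Real.cos (φ + Real.pi) := by
      rw [Real.cos_add_pi]; linarith [hq1]
    have hq2' : p.2 - q.2 = d * Real.sin (φ + Real.pi) := by
      rw [Real.sin_add_pi]; linarith [hq2]
    have H' : ∀ w ∈ P, w ≠ q → w ≠ p → d^2 ≤ sqd q w ∨ d^2 ≤ sqd p w := by
      intro w hw hwq hwp
      exact (H w hw hwp hwq).symm
    have hsval' : (u.1 - q.1) * Real.cos (φ + Real.pi) + (u.2 - q.2) * Real.sin (φ + Real.pi)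
        = d - sval := by
      rw [Real.cos_add_pi, Real.sin_add_pi, hsval]
      linear_combination (Real.cos φ) * hq1 + (Real.sin φ) * hq2 + d * pyth
    have htval' : (u.2 - q.2) * Real.cos (φ + Real.pi) - (u.1 - q.1) * Real.sin (φ + Real.pi)
        = -tval := by
      rw [Real.cos_add_pi, Real.sin_add_pi, htval]
      linear_combination (Real.cos φ) * hq2 - (Real.sin φ) * hq1
    rcases lt_or_ge 0 sval with hspos | hsle
    · -- anchor at p
      rcases lt_or_ge tval 0 with htneg | htge
      · exact core' hgp hp hqP (Ne.symm hqp) hd hq1 hq2 (Or.inl rfl) H huP hup huq hspos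
          (by rw [← htval]; linarith [htneg])
      · have htpos : 0 < tval := lt_of_le_of_ne htge (Ne.symm htz)
        exact core' hgp hp hqP (Ne.symm hqp) hd hq1 hq2 (Or.inr rfl) H huP hup huq hspos
          (by rw [← htval]; linarith [htpos])
    · -- anchor at q
      have hs' : 0 < (u.1 - q.1) * Real.cos (φ + Real.pi) + (u.2 - q.2) * Real.sin (φ + Real.pi) := by
        rw [hsval']; linarith
      obtain ⟨S, h1, -, h2⟩ : ∃ S', Is4kSquare P 3 S' ∧ q ∈ contactPoints P S' ∧ p ∈ contactPoints P S' := by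
        rcases lt_or_ge tval 0 with htneg | htge
        · -- tval' = -tval > 0 : take ε = -1
          exact core hgp hqP hp hqp hd hq1' hq2' (Or.inr rfl) H' huP huq hup hs'
            (by rw [htval']; linarith [htneg])
        · have htpos : 0 < tval := lt_of_le_of_ne htge (Ne.symm htz)
          exact core hgp hqP hp hqp hd hq1' hq2' (Or.inl rfl) H' huP huq hup hs'
            (by rw [htval']; linarith [htpos])
      exact ⟨S, h1, h2⟩

end Sq43

/-- There is a constant `c > 0` such that every finite set `P` of
`n ≥ 3` points in general position admits at least `c * n` distinct
`(4,3)`-squares. -/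
theorem linear_le_num43Squares :
    ∃ c : ℝ, 0 < c ∧
      ∀ P : Finset (ℝ × ℝ), 3 ≤ P.card → GenPos P →
        ∃ T : Finset Square,
          (∀ S ∈ T, Is4kSquare P 3 S) ∧
          c * (P.card : ℝ) ≤ (T.card : ℝ) := by
  classical
  refine ⟨1/3, by norm_num, ?_⟩
  intro P h3 hgp
  have hper : ∀ p : {x // x ∈ P}, ∃ S : Square,
      Is4kSquare P 3 S ∧ (p : ℝ × ℝ) ∈ contactPoints P S :=
    fun p => Sq43.per_point hgp h3 p.1 p.2
  choose f hf using hper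
  refine ⟨P.attach.image f, ?_, ?_⟩
  · intro S hS
    obtain ⟨x, -, rfl⟩ := Finset.mem_image.mp hS
    exact (hf x).1
  · have hcard : P.attach.card ≤ 3 * (P.attach.image f).card := by
      apply Finset.card_le_mul_card_image
      intro S hS
      have hsub : ↑((P.attach.filter (fun x => f x = S)).image Subtype.val)
          ⊆ contactPoints P S := by
        intro w hw
        simp only [Finset.coe_image, Set.mem_image, Finset.mem_coe, Finset.mem_filter] at hw
        obtain ⟨x, ⟨-, hfx⟩, rfl⟩ := hw
        rw [← hfx]
        exact (hf x).2
      have h1 := Sq43.le_ncard_of_finset _ hsub (Sq43.contactPoints_finite P S)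
      obtain ⟨x, -, rfl⟩ := Finset.mem_image.mp hS
      rw [(hf x).1.2] at h1
      rwa [Finset.card_image_of_injective _ Subtype.val_injective] at h1
    rw [Finset.card_attach] at hcard
    have hc : (P.card : ℝ) ≤ 3 * ((P.attach.image f).card : ℝ) := by
      exact_mod_cast hcard
    linarith
end
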